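/- arXiv:1205.3552 — 8 statements merged into one kernel-verified Lean document; each statement's English description precedes it below -/
import Mathlib

section
/- Let q ∈ ℤ with |q| ≥ 2, let A = [q] be the 1×1 matrix acting on ℝ, and let D = {d₁, …, d_|q|} ⊂ ℝ be a set of |q| distinct real numbers. Then the self-affine set T(A, D) is an interval if and only if, up to a translation, D = {0, a, 2a, …, (|q|−1)a} for some a > 0. -/
/-!
Both directions rest on the self-similarity `q • T = T + D` of `T = T([q], D)` and on the
uniqueness of the attractor: a closed, bounded, nonempty `I` with `q • I = I + D` equals `T`.

If `T = [u, u + ℓ]`, then `[u, u + ℓ] + D = q • T` is an interval of length `|q| ℓ` covered by the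
`|q|` translates `[u, u + ℓ] + d`. Comparing Lebesgue measures, the translates overlap only in null
sets, so the digits are `ℓ`-separated points in an interval of length `(|q| - 1) ℓ`: they form an
arithmetic progression of step `ℓ`. Conversely, for `D = t + a {0, …, |q| - 1}` the interval of
length `a` centred at `(t + (|q| - 1) a / 2) / (q - 1)` satisfies `q • I = I + D`.
-/

/-- The one-dimensional self-affine set `T([q], D) = { ∑_{i≥1} q^{-i} d_i : d_i ∈ D }`. -/
noncomputable def selfAffine1 (q : ℤ) (D : Set ℝ) : Set ℝ :=
  {x | ∃ d : ℕ → ℝ, (∀ i, d i ∈ D) ∧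
    HasSum (fun i => ((q : ℝ)⁻¹) ^ (i + 1) * d i) x}

open Set Filter MeasureTheory
open scoped Pointwise

section SelfAffine

variable {q : ℤ}

lemma one_lt_abs_intCast (hq : 1 < |q|) : 1 < |(q : ℝ)| := by
  rw [← Int.cast_abs]
  exact_mod_cast hq

lemma intCast_ne_zero_of_one_lt_abs (hq : 1 < |q|) : (q : ℝ) ≠ 0 :=
  abs_pos.mp (zero_lt_one.trans (one_lt_abs_intCast hq))

lemma intCast_sub_one_ne_zero_of_one_lt_abs (hq : 1 < |q|) : (q : ℝ) - 1 ≠ 0 := by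
  rw [sub_ne_zero]
  rintro h
  simpa [h] using one_lt_abs_intCast hq

lemma abs_intCast_inv_lt_one (hq : 1 < |q|) : |(q : ℝ)⁻¹| < 1 := by
  rw [abs_inv]
  exact inv_lt_one_of_one_lt₀ (one_lt_abs_intCast hq)

lemma hasSum_digits_iff_tail (hq : (q : ℝ) ≠ 0) (d : ℕ → ℝ) (x : ℝ) :
    HasSum (fun i => ((q : ℝ)⁻¹) ^ (i + 1) * d i) x ↔
      HasSum (fun i => ((q : ℝ)⁻¹) ^ (i + 1) * d (i + 1)) (q * x - d 0) := by
  have hshift : (fun i => ((q : ℝ)⁻¹) ^ (i + 1 + 1) * d (i + 1)) =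
      fun i => (q : ℝ)⁻¹ * (((q : ℝ)⁻¹) ^ (i + 1) * d (i + 1)) := by
    funext i
    ring
  have hx : x - ∑ i ∈ Finset.range 1, ((q : ℝ)⁻¹) ^ (i + 1) * d i =
      (q : ℝ)⁻¹ * (q * x - d 0) := by
    rw [Finset.sum_range_one, mul_sub, inv_mul_cancel_left₀ hq]
    ring
  rw [← hasSum_nat_add_iff' 1, hshift, hx, hasSum_mul_left_iff (inv_ne_zero hq)]

theorem smul_selfAffine1 (hq : (q : ℝ) ≠ 0) (D : Set ℝ) :
    (q : ℝ) • selfAffine1 q D = selfAffine1 q D + D := by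
  ext x
  constructor
  · rintro ⟨y, ⟨d, hd, hy⟩, rfl⟩
    exact ⟨_, ⟨fun i => d (i + 1), fun i => hd _, (hasSum_digits_iff_tail hq d y).mp hy⟩,
      d 0, hd 0, by simp [smul_eq_mul]⟩
  · rintro ⟨y, ⟨e, he, hy⟩, d, hd, rfl⟩
    refine ⟨(q : ℝ)⁻¹ * (y + d), ⟨fun i => Nat.casesOn i d e, ?_, ?_⟩, ?_⟩
    · rintro (_ | i)
      exacts [hd, he i]
    · rw [hasSum_digits_iff_tail hq]
      simpa [hq] using hy
    · simp [smul_eq_mul, hq]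

lemma selfAffine1_subset_of_add_subset_smul (hq : 1 < |q|) {D I : Set ℝ} (hI : IsClosed I)
    (hne : I.Nonempty) (h : I + D ⊆ (q : ℝ) • I) : selfAffine1 q D ⊆ I := by
  obtain ⟨y, hy⟩ := hne
  rintro x ⟨d, hd, hx⟩
  have hmaps : ∀ z ∈ I, ∀ e ∈ D, (q : ℝ)⁻¹ * (z + e) ∈ I := fun z hz e he =>
    (mem_smul_set_iff_inv_smul_mem₀ (intCast_ne_zero_of_one_lt_abs hq) _ _).mp
      (h (add_mem_add hz he))
  have htrunc : ∀ N, ∀ z ∈ I,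
      ∑ i ∈ Finset.range N, ((q : ℝ)⁻¹) ^ (i + 1) * d i + ((q : ℝ)⁻¹) ^ N * z ∈ I := by
    intro N
    induction N with
    | zero => simp
    | succ N ih =>
      intro z hz
      convert ih _ (hmaps z hz _ (hd N)) using 1
      rw [Finset.sum_range_succ]
      ring
  refine hI.mem_of_tendsto (b := atTop) ?_ (Eventually.of_forall fun N => htrunc N y hy)
  simpa using hx.tendsto_sum_nat.add
    ((tendsto_pow_atTop_nhds_zero_of_abs_lt_one (abs_intCast_inv_lt_one hq)).mul_const y)

lemma subset_selfAffine1_of_smul_subset_add (hq : 1 < |q|) {D I : Set ℝ}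
    (hI : Bornology.IsBounded I) (h : (q : ℝ) • I ⊆ I + D) : I ⊆ selfAffine1 q D := by
  have hstep : ∀ y ∈ I, ∃ z ∈ I, (q : ℝ) * y - z ∈ D := fun y hy => by
    obtain ⟨z, hz, e, he, hze⟩ := h (smul_mem_smul_set hy)
    refine ⟨z, hz, ?_⟩
    rw [← smul_eq_mul, ← hze]
    simpa using he
  -- the digits of `x` are read off its orbit under `F`, and its expansion telescopes
  choose! F hFI hFD using hstep
  intro x hx
  have horbit : ∀ i, F^[i] x ∈ I := fun i => by
    induction i with
    | zero => exact hx
    | succ i ih => rw [Function.iterate_succ_apply']; exact hFI _ ih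
  obtain ⟨M, hM⟩ := isBounded_iff_forall_norm_le.mp hI
  set g : ℕ → ℝ := fun i => ((q : ℝ)⁻¹) ^ i * F^[i] x with hg
  have hsum : Summable g := by
    refine Summable.of_norm_bounded
      ((summable_geometric_of_lt_one (abs_nonneg _) (abs_intCast_inv_lt_one hq)).mul_left M)
      fun i => ?_
    rw [norm_mul, norm_pow, Real.norm_eq_abs, mul_comm M]
    exact mul_le_mul_of_nonneg_left (hM _ (horbit i)) (by positivity)
  have htel : (fun i => ((q : ℝ)⁻¹) ^ (i + 1) * (q * F^[i] x - F^[i + 1] x)) =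
      fun i => g i - g (i + 1) := by
    have := intCast_ne_zero_of_one_lt_abs hq
    funext i
    simp only [hg, pow_succ]
    field_simp
  have hg0 : g 0 = x := by simp [hg]
  refine ⟨fun i => q * F^[i] x - F^[i + 1] x, fun i => ?_, ?_⟩
  · dsimp only
    rw [Function.iterate_succ_apply']
    exact hFD _ (horbit i)
  · have h := hsum.hasSum.sub ((hasSum_nat_add_iff' 1).mpr hsum.hasSum)
    rwa [Finset.sum_range_one, sub_sub_cancel, hg0, ← htel] at h

theorem selfAffine1_eq_of_smul_eq (hq : 1 < |q|) {D I : Set ℝ} (hIc : IsClosed I)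
    (hIb : Bornology.IsBounded I) (hne : I.Nonempty) (h : (q : ℝ) • I = I + D) :
    selfAffine1 q D = I :=
  (selfAffine1_subset_of_add_subset_smul hq hIc hne h.ge).antisymm
    (subset_selfAffine1_of_smul_subset_add hq hIb h.le)

lemma selfAffine1_nonempty (hq : 1 < |q|) {D : Set ℝ} (hD : D.Nonempty) :
    (selfAffine1 q D).Nonempty := by
  obtain ⟨d, hd⟩ := hD
  have hq1 := intCast_sub_one_ne_zero_of_one_lt_abs hq
  refine ⟨d / (q - 1),
    subset_selfAffine1_of_smul_subset_add hq Bornology.isBounded_singleton ?_ rfl⟩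
  rw [smul_set_singleton, singleton_subset_iff]
  exact ⟨_, rfl, d, hd, by rw [smul_eq_mul]; field_simp; ring⟩

lemma selfAffine1_nontrivial (hq : 1 < |q|) {D : Set ℝ} (hD : D.Nontrivial) :
    (selfAffine1 q D).Nontrivial := by
  obtain ⟨x, hx⟩ := selfAffine1_nonempty hq hD.nonempty
  refine (nontrivial_iff_ne_singleton hx).mpr fun hT => hD.not_subsingleton fun d hd d' hd' => ?_
  have hfix := smul_selfAffine1 (intCast_ne_zero_of_one_lt_abs hq) D
  rw [hT, smul_set_singleton, singleton_add] at hfix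
  have h1 : x + d ∈ ({(q : ℝ) • x} : Set ℝ) := hfix ▸ mem_image_of_mem _ hd
  have h2 : x + d' ∈ ({(q : ℝ) • x} : Set ℝ) := hfix ▸ mem_image_of_mem _ hd'
  rw [mem_singleton_iff] at h1 h2
  linarith

end SelfAffine

lemma smul_Icc_eq_of_le (c u w : ℝ) (h : u ≤ w) :
    c • Icc u w = Icc (c * ((u + w) / 2) - |c| * ((w - u) / 2))
      (c * ((u + w) / 2) + |c| * ((w - u) / 2)) := by
  rw [Real.Icc_eq_closedBall, smul_closedBall _ _ (by linarith), Real.closedBall_eq_Icc,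
    smul_eq_mul, Real.norm_eq_abs]

lemma Icc_add_eq_biUnion (u w : ℝ) (D : Set ℝ) :
    Icc u w + D = ⋃ d ∈ D, Icc (u + d) (w + d) := by
  simp_rw [← iUnion_add_right_image, image_add_const_Icc]

lemma measure_biUnion_add_inter_le {α ι : Type*} [MeasurableSpace α] [DecidableEq ι] (μ : Measure α)
    {s : Finset ι} {f : ι → Set α} {i j : ι} (hi : i ∈ s) (hj : j ∈ s) (hij : i ≠ j)
    (hfi : MeasurableSet (f i)) :
    μ (⋃ k ∈ s, f k) + μ (f i ∩ f j) ≤ ∑ k ∈ s, μ (f k) := by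
  have hU : f i ∪ ⋃ k ∈ s.erase i, f k = ⋃ k ∈ s, f k := by
    rw [← Finset.set_biUnion_insert, Finset.insert_erase hi]
  calc μ (⋃ k ∈ s, f k) + μ (f i ∩ f j)
      ≤ μ (f i ∪ ⋃ k ∈ s.erase i, f k) + μ (f i ∩ ⋃ k ∈ s.erase i, f k) := by
        rw [hU]
        gcongr
        exact Finset.subset_set_biUnion_of_mem (Finset.mem_erase.mpr ⟨hij.symm, hj⟩)
    _ = μ (f i) + μ (⋃ k ∈ s.erase i, f k) := measure_union_add_inter' hfi _
    _ ≤ μ (f i) + ∑ k ∈ s.erase i, μ (f k) := by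
        gcongr
        exact measure_biUnion_finset_le _ _
    _ = ∑ k ∈ s, μ (f k) := Finset.add_sum_erase s (fun k => μ (f k)) hi

lemma le_abs_sub_of_volume_Icc_inter_eq_zero {u w a b : ℝ}
    (h : volume (Icc (u + a) (w + a) ∩ Icc (u + b) (w + b)) = 0) : w - u ≤ |a - b| := by
  rw [Icc_inter_Icc, Real.volume_Icc, ENNReal.ofReal_eq_zero, sub_nonpos, min_add_add_left,
    max_add_add_left] at h
  rw [abs_sub_comm, ← max_sub_min_eq_abs]
  linarith

lemma coe_eq_arithProg_of_separated {E : Finset ℝ} {n : ℕ} (hE : E.card = n) {c ℓ : ℝ}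
    (hlow : ∀ e ∈ E, c ≤ e) (hhigh : ∀ e ∈ E, e ≤ c + ((n : ℝ) - 1) * ℓ)
    (hsep : ∀ e₁ ∈ E, ∀ e₂ ∈ E, e₁ ≠ e₂ → ℓ ≤ |e₁ - e₂|) :
    (E : Set ℝ) = (fun k : ℕ => c + ℓ * k) '' {k | k < n} := by
  set e := E.orderEmbOfFin hE
  have hgap : ∀ i j (hi : i < n) (hj : j < n), i ≤ j →
      e ⟨i, hi⟩ + ((j : ℝ) - i) * ℓ ≤ e ⟨j, hj⟩ := by
    intro i j hi hj hij
    induction j, hij using Nat.le_induction with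
    | base => simp
    | succ j hij ih =>
      have hlt : e ⟨j, by omega⟩ < e ⟨j + 1, hj⟩ := e.strictMono (by simp [Fin.lt_def])
      have hs := hsep _ (E.orderEmbOfFin_mem hE _) _ (E.orderEmbOfFin_mem hE _) hlt.ne'
      rw [abs_of_pos (sub_pos.mpr hlt)] at hs
      push_cast
      linarith [ih (by omega)]
  have he : ∀ k (hk : k < n), e ⟨k, hk⟩ = c + ℓ * k := by
    intro k hk
    have h0 := hgap 0 k (by omega) hk (Nat.zero_le k)
    have h1 := hgap k (n - 1) hk (by omega) (by omega)
    have hc := hlow _ (E.orderEmbOfFin_mem hE ⟨0, by omega⟩)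
    have hc' := hhigh _ (E.orderEmbOfFin_mem hE ⟨n - 1, by omega⟩)
    rw [Nat.cast_sub (by omega : 1 ≤ n)] at h1
    push_cast at h0 h1
    linarith
  rw [← E.range_orderEmbOfFin hE]
  ext x
  constructor
  · rintro ⟨⟨k, hk⟩, rfl⟩
    exact ⟨k, hk, (he k hk).symm⟩
  · rintro ⟨k, hk, rfl⟩
    exact ⟨⟨k, hk⟩, he k hk⟩

lemma coe_eq_arithProg_of_Icc_add_eq {u ℓ t : ℝ} (hℓ : 0 < ℓ) {D : Finset ℝ} {n : ℕ}
    (hD : D.card = n) (h : Icc u (u + ℓ) + (D : Set ℝ) = Icc (u + t) (u + t + n * ℓ)) :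
    (D : Set ℝ) = (fun k : ℕ => t + ℓ * k) '' {k | k < n} := by
  rw [Icc_add_eq_biUnion] at h
  have hsub : ∀ d ∈ D, Icc (u + d) (u + ℓ + d) ⊆ Icc (u + t) (u + t + n * ℓ) :=
    fun d hd => h ▸ subset_biUnion_of_mem (u := fun d => Icc (u + d) (u + ℓ + d)) hd
  have hvol : ∑ d ∈ D, volume (Icc (u + d) (u + ℓ + d)) =
      volume (⋃ d ∈ D, Icc (u + d) (u + ℓ + d)) := by
    simp only [Finset.set_biUnion_coe] at h
    have hlen : ∀ d, u + ℓ + d - (u + d) = ℓ := fun d => by ring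
    rw [h, Real.volume_Icc, add_sub_cancel_left]
    simp only [Real.volume_Icc, hlen, Finset.sum_const, hD, nsmul_eq_mul]
    rw [ENNReal.ofReal_mul (Nat.cast_nonneg n), ENNReal.ofReal_natCast]
  refine coe_eq_arithProg_of_separated hD (fun d hd => ?_) (fun d hd => ?_)
    (fun d hd d' hd' hne => ?_)
  · linarith [(hsub d hd ⟨le_rfl, by linarith⟩).1]
  · linarith [(hsub d hd ⟨by linarith, le_rfl⟩).2]
  · have hle := measure_biUnion_add_inter_le volume hd hd' hne
      (f := fun d => Icc (u + d) (u + ℓ + d)) measurableSet_Icc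
    rw [← hvol] at hle
    have hfin : ∑ d ∈ D, volume (Icc (u + d) (u + ℓ + d)) ≠ ⊤ :=
      ENNReal.sum_ne_top.mpr fun _ _ => measure_Icc_lt_top.ne
    have hnull := (ENNReal.add_le_add_iff_left hfin).mp (hle.trans (add_zero _).ge)
    simpa using le_abs_sub_of_volume_Icc_inter_eq_zero (nonpos_iff_eq_zero.mp hnull)

lemma Icc_add_arithProg_eq {u ℓ : ℝ} (hℓ : 0 < ℓ) (t : ℝ) {n : ℕ} (hn : 0 < n) :
    Icc u (u + ℓ) + (fun k : ℕ => t + ℓ * k) '' {k | k < n} = Icc (u + t) (u + t + n * ℓ) := by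
  refine Subset.antisymm ?_ fun z ⟨hz1, hz2⟩ => ?_
  · rintro _ ⟨y, ⟨hy1, hy2⟩, _, ⟨k, hk, rfl⟩, rfl⟩
    have hk' : (k : ℝ) + 1 ≤ n := by exact_mod_cast hk
    constructor <;> nlinarith
  set x := (z - u - t) / ℓ
  have hx0 : 0 ≤ x := div_nonneg (by linarith) hℓ.le
  have hxn : x ≤ n := (div_le_iff₀ hℓ).mpr (by linarith)
  obtain ⟨k, hk, hkx, hxk⟩ : ∃ k < n, (k : ℝ) ≤ x ∧ x ≤ k + 1 := by
    rcases lt_or_ge x n with hx | hx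
    · exact ⟨⌊x⌋₊, (Nat.floor_lt hx0).mpr hx, Nat.floor_le hx0, (Nat.lt_floor_add_one x).le⟩
    · refine ⟨n - 1, by omega, ?_, ?_⟩ <;> rw [Nat.cast_pred hn] <;> linarith
  rw [le_div_iff₀ hℓ] at hkx
  rw [div_le_iff₀ hℓ] at hxk
  exact ⟨z - t - ℓ * k, ⟨by linarith, by linarith⟩, _, ⟨k, hk, rfl⟩, by ring⟩

/-- For `A = [q]`, `|q| ≥ 2`, and a digit set `D ⊂ ℝ` with `|q|` elements,
`T(A, D)` is an interval iff, up to translation, `D = {0, a, 2a, …, (|q|-1)a}`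
for some `a > 0`. -/
theorem interval_iff_arith_digits (q : ℤ) (hq : 2 ≤ |q|)
    (D : Finset ℝ) (hcard : D.card = q.natAbs) :
    (∃ u w : ℝ, selfAffine1 q ↑D = Set.Icc u w) ↔
    (∃ a : ℝ, 0 < a ∧ ∃ t : ℝ,
      (D : Set ℝ) = (fun k : ℕ => t + a * k) '' {k | k < q.natAbs}) := by
  have hq1 : 1 < |q| := one_lt_two.trans_le hq
  have hn2 : 2 ≤ q.natAbs := by rw [Int.abs_eq_natAbs] at hq; omega
  have hn : (q.natAbs : ℝ) = |(q : ℝ)| := by rw [Nat.cast_natAbs, Int.cast_abs]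
  constructor
  · rintro ⟨u, w, hT⟩
    have hfix := smul_selfAffine1 (intCast_ne_zero_of_one_lt_abs hq1) D
    have hD : (D : Set ℝ).Nontrivial :=
      Finset.nontrivial_coe.mpr (Finset.one_lt_card_iff_nontrivial.mp (by omega))
    obtain ⟨x, hx, y, hy, hxy⟩ := hT ▸ selfAffine1_nontrivial hq1 hD
    obtain ⟨ℓ, rfl⟩ : ∃ ℓ, w = u + ℓ := ⟨w - u, by ring⟩
    have hℓ : 0 < ℓ := by
      rcases hxy.lt_or_gt with h | h <;> linarith [hx.1, hx.2, hy.1, hy.2]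
    rw [hT, smul_Icc_eq_of_le _ _ _ (by linarith)] at hfix
    refine ⟨ℓ, hℓ, _, coe_eq_arithProg_of_Icc_add_eq hℓ hcard
      (t := q * (u + ℓ / 2) - |(q : ℝ)| * (ℓ / 2) - u) (hfix.symm.trans ?_)⟩
    rw [hn]
    congr 1 <;> ring
  · rintro ⟨a, ha, t, hD⟩
    obtain ⟨m, hm⟩ : ∃ m : ℝ, (q - 1) * m = t + (|(q : ℝ)| - 1) * a / 2 :=
      ⟨_, mul_div_cancel₀ _ (intCast_sub_one_ne_zero_of_one_lt_abs hq1)⟩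
    refine ⟨m - a / 2, m - a / 2 + a, selfAffine1_eq_of_smul_eq hq1 isClosed_Icc
      (Metric.isBounded_Icc _ _) (nonempty_Icc.2 (by linarith)) ?_⟩
    rw [smul_Icc_eq_of_le _ _ _ (by linarith), hD, Icc_add_arithProg_eq ha t (by omega)]
    rw [hn]
    congr 1 <;> linear_combination hm
end

section
/- Let A ∈ M₂(ℤ) be an expanding matrix whose characteristic polynomial is f(x) = x² + x + 3 or f(x) = x² − x + 3, and let D = {0, 1, b}v where b ∈ ℝ, b > 1, and v ∈ ℝ² is such that {v, Av} is linearly independent. If b ≥ 67/25 or b ≤ 67/42, then the self-affine set T(A, D) is disconnected. -/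
/-!
By Cayley–Hamilton, `A² = tA - 3` with `t = ±1`. Take a linear functional `H` with `H(A⁻¹v) = 1`
and `H(A⁻²v) = 0`; then `σₖ = H(A⁻⁽ᵏ⁺¹⁾v)` satisfies `3σₖ₊₂ = tσₖ₊₁ - σₖ`, so `|σₖ|` does not depend
on `t`, and `S = ∑_{k ≥ 1} |σₖ| < 42/67`: the first terms are computed exactly, and a nonnegative
sequence with `sₖ₊₂ ≤ (sₖ₊₁ + sₖ)/3` has tail sum `∑_{k ≥ 2} sₖ ≤ s₀ + 2s₁`.

A point of `T` with first digit `c` is sent by `H` into the interval of radius `bS/2` around `c + m`,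
for a constant `m`. Splitting the digits as `{0, 1} | {b}` when `b ≥ 67/25`, or as `{0} | {1, b}`
when `b ≤ 67/42`, leaves a gap wider than `bS` between the two groups of intervals (the gaps are
`b - 1` and `1`, and `S < 42/67` makes them exceed `bS` in these ranges of `b`), so `H(T)` is
not an interval and `T` is disconnected.
-/

open Matrix Polynomial

/-- The real matrix obtained from an integer matrix by entrywise coercion. -/
noncomputable def matR {n : ℕ} (A : Matrix (Fin n) (Fin n) ℤ) : Matrix (Fin n) (Fin n) ℝ :=
  A.map (fun a => (a : ℝ))

/-- An integer matrix is expanding if every complex root of its characteristic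
polynomial (i.e. every eigenvalue) has modulus strictly greater than 1. -/
def IsExpanding {n : ℕ} (A : Matrix (Fin n) (Fin n) ℤ) : Prop :=
  ∀ z : ℂ, Polynomial.aeval z A.charpoly = 0 → 1 < ‖z‖

/-- The self-affine set `T(A, D) = { ∑_{i≥1} A^{-i} d_i : d_i ∈ D }`. -/
noncomputable def selfAffine {n : ℕ} (A : Matrix (Fin n) (Fin n) ℤ)
    (D : Set (Fin n → ℝ)) : Set (Fin n → ℝ) :=
  {x | ∃ d : ℕ → (Fin n → ℝ), (∀ i, d i ∈ D) ∧
    HasSum (fun i => ((matR A)⁻¹ ^ (i + 1)).mulVec (d i)) x}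

open Finset

theorem sum_range_add_two_add_le {s : ℕ → ℝ} (hs : ∀ k, s (k + 2) ≤ (s (k + 1) + s k) / 3)
    (N : ℕ) : ∑ k ∈ range N, s (k + 2) + 2 * s (N + 1) + s N ≤ s 0 + 2 * s 1 := by
  induction N with
  | zero => simp only [sum_range_zero]; linarith
  | succ N ih =>
    rw [sum_range_succ]
    linarith [hs N]

theorem summable_and_tsum_add_two_le {s : ℕ → ℝ} (h0 : ∀ k, 0 ≤ s k)
    (hs : ∀ k, s (k + 2) ≤ (s (k + 1) + s k) / 3) :
    Summable s ∧ ∑' k, s (k + 2) ≤ s 0 + 2 * s 1 := by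
  have hbound (N : ℕ) : ∑ k ∈ range N, s (k + 2) ≤ s 0 + 2 * s 1 := by
    linarith [sum_range_add_two_add_le hs N, h0 N, h0 (N + 1)]
  exact ⟨(summable_nat_add_iff 2).mp (summable_of_sum_range_le (fun k => h0 _) hbound),
    Real.tsum_le_of_sum_range_le (fun k => h0 _) hbound⟩

theorem abs_tsum_mul_sub_le {c σ : ℕ → ℝ} {b : ℝ} (hc : ∀ i, c i ∈ Set.Icc 0 b)
    (hσ : Summable fun i => |σ i|) :
    |∑' i, c i * σ i - b / 2 * ∑' i, σ i| ≤ b / 2 * ∑' i, |σ i| := by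
  have hdev (i : ℕ) : |(c i - b / 2) * σ i| ≤ b / 2 * |σ i| := by
    rw [abs_mul]
    gcongr
    exact abs_sub_le_iff.2 ⟨by linarith [(hc i).2], by linarith [(hc i).1]⟩
  have hσ' : Summable σ := hσ.of_abs
  have hdevs : Summable fun i => (c i - b / 2) * σ i :=
    Summable.of_norm_bounded (hσ.mul_left (b / 2)) hdev
  calc |∑' i, c i * σ i - b / 2 * ∑' i, σ i| = |∑' i, (c i - b / 2) * σ i| := by
        rw [← tsum_mul_left, ← Summable.tsum_sub]
        · simp_rw [sub_mul]
        · exact (hdevs.add (hσ'.mul_left (b / 2))).congr fun i => by ring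
        · exact hσ'.mul_left _
    _ ≤ ∑' i, b / 2 * |σ i| :=
        (norm_tsum_le_tsum_norm hdevs.norm).trans (hdevs.norm.tsum_le_tsum hdev (hσ.mul_left _))
    _ = b / 2 * ∑' i, |σ i| := tsum_mul_left

theorem not_isPreconnected_of_continuous_split {X : Type*} [TopologicalSpace X] {T : Set X}
    {f : X → ℝ} (hf : Continuous f) {α β : ℝ} (hαβ : α < β)
    (hT : ∀ x ∈ T, f x ≤ α ∨ β ≤ f x) {x y : X} (hx : x ∈ T) (hxα : f x ≤ α) (hy : y ∈ T)
    (hyβ : β ≤ f y) : ¬ IsPreconnected T := by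
  intro hpre
  obtain ⟨z, hz, hfz⟩ := hpre.intermediate_value hx hy hf.continuousOn
    (show (α + β) / 2 ∈ Set.Icc (f x) (f y) from ⟨by linarith, by linarith⟩)
  rcases hT z hz with h | h <;> linarith

theorem exists_continuousLinearMap_apply_eq {ι E : Type*} [Fintype ι] [Nonempty ι]
    [NormedAddCommGroup E] [NormedSpace ℝ E] [FiniteDimensional ℝ E] {f : ι → E}
    (hf : LinearIndependent ℝ f) (hcard : Fintype.card ι = Module.finrank ℝ E) (g : ι → ℝ) :
    ∃ H : E →L[ℝ] ℝ, ∀ i, H (f i) = g i := by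
  let basis := basisOfLinearIndependentOfCardEqFinrank hf hcard
  refine ⟨LinearMap.toContinuousLinearMap (basis.constr ℝ g), fun i => ?_⟩
  simpa [basis] using basis.constr_basis ℝ g i

section QuadraticMatrix

variable {n : Type*} [Fintype n] [DecidableEq n]

theorem mul_self_eq_of_charpoly_eq {R : Type*} [CommRing R] {B : Matrix n n R} {t d : R}
    (h : B.charpoly = X ^ 2 - C t * X + C d) : B * B = t • B - d • 1 := by
  have := aeval_self_charpoly B
  rw [h] at this
  simp only [map_add, map_sub, map_mul, aeval_X, aeval_C, Algebra.algebraMap_eq_smul_one,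
    smul_mul_assoc, one_mul, sq] at this
  rw [← sub_eq_zero, ← this]
  abel

variable {B : Matrix n n ℝ} {t d : ℝ}

theorem isUnit_det_of_mul_self_eq (hd : d ≠ 0) (hB : B * B = t • B - d • 1) : IsUnit B.det := by
  refine isUnit_det_of_right_inverse (B := d⁻¹ • (t • 1 - B)) ?_
  rw [mul_smul_comm, mul_sub, mul_smul_comm, mul_one, hB, sub_sub_cancel, smul_smul,
    inv_mul_cancel₀ hd, one_smul]

theorem mulVec_mulVec_eq_of_mul_self_eq (hB : B * B = t • B - d • 1) (w : n → ℝ) :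
    B *ᵥ (B *ᵥ w) = t • (B *ᵥ w) - d • w := by
  rw [mulVec_mulVec, hB, sub_mulVec, smul_mulVec, smul_mulVec, one_mulVec]

theorem mulVec_inv_pow_succ_mulVec (hB : IsUnit B.det) (v : n → ℝ) (k : ℕ) :
    B *ᵥ (B⁻¹ ^ (k + 1) *ᵥ v) = B⁻¹ ^ k *ᵥ v := by
  rw [mulVec_mulVec, pow_succ', ← mul_assoc, mul_nonsing_inv B hB, one_mul]

end QuadraticMatrix

noncomputable def orbitSeq (t : ℝ) : ℕ → ℝ
  | 0 => 1
  | 1 => 0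
  | k + 2 => (t * orbitSeq t (k + 1) - orbitSeq t k) / 3

theorem orbitSeq_eq_pow_mul {t : ℝ} (ht : t ^ 2 = 1) (k : ℕ) :
    orbitSeq t k = t ^ k * orbitSeq 1 k := by
  induction k using Nat.twoStepInduction with
  | zero => simp [orbitSeq]
  | one => simp [orbitSeq]
  | more k ih₀ ih₁ =>
    simp only [orbitSeq, ih₀, ih₁]
    linear_combination (t ^ k * orbitSeq 1 k / 3) * ht

theorem abs_orbitSeq {t : ℝ} (ht : t ^ 2 = 1) (k : ℕ) : |orbitSeq t k| = |orbitSeq 1 k| := by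
  have : |t| = 1 := (pow_eq_one_iff_of_nonneg (abs_nonneg t) two_ne_zero).1 (by rw [sq_abs, ht])
  rw [orbitSeq_eq_pow_mul ht, abs_mul, abs_pow, this, one_pow, one_mul]

theorem abs_orbitSeq_one_add_two_le (k : ℕ) :
    |orbitSeq 1 (k + 2)| ≤ (|orbitSeq 1 (k + 1)| + |orbitSeq 1 k|) / 3 := by
  rw [orbitSeq, one_mul, abs_div, abs_of_pos (by norm_num : (0 : ℝ) < 3)]
  gcongr
  exact abs_sub _ _

theorem summable_abs_orbitSeq_and_tsum_lt {t : ℝ} (ht : t ^ 2 = 1) :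
    (Summable fun i => |orbitSeq t i|) ∧ ∑' i, |orbitSeq t (i + 1)| < 42 / 67 := by
  simp_rw [abs_orbitSeq ht]
  obtain ⟨hsum, htail⟩ := summable_and_tsum_add_two_le (s := fun k => |orbitSeq 1 (k + 10)|)
    (fun k => abs_nonneg _) (fun k => abs_orbitSeq_one_add_two_le (k + 10))
  have hsum' : Summable fun i => |orbitSeq 1 i| := (summable_nat_add_iff 10).1 hsum
  refine ⟨hsum', ?_⟩
  rw [← Summable.sum_add_tsum_nat_add 11 ((summable_nat_add_iff 1).2 hsum')]
  calc ∑ i ∈ range 11, |orbitSeq 1 (i + 1)| + ∑' i, |orbitSeq 1 (i + 11 + 1)|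
      ≤ ∑ i ∈ range 11, |orbitSeq 1 (i + 1)| + |orbitSeq 1 10| + 2 * |orbitSeq 1 11| := by
        rw [add_assoc]
        exact add_le_add_right htail _
    _ = 12335 / 19683 := by
        norm_num [orbitSeq, sum_range_succ, abs_of_nonneg, abs_of_nonpos]
    _ < 42 / 67 := by norm_num

theorem mem_selfAffine_iff {n : ℕ} {A : Matrix (Fin n) (Fin n) ℤ} {v x : Fin n → ℝ} {b : ℝ} :
    x ∈ selfAffine A {0, v, b • v} ↔ ∃ c : ℕ → ℝ, (∀ i, c i ∈ ({0, 1, b} : Set ℝ)) ∧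
      HasSum (fun i => c i • ((matR A)⁻¹ ^ (i + 1) *ᵥ v)) x := by
  constructor
  · rintro ⟨d, hd, hx⟩
    have (i : ℕ) : ∃ c ∈ ({0, 1, b} : Set ℝ), d i = c • v := by
      rcases hd i with h | h | h
      · exact ⟨0, by simp, by simp [h]⟩
      · exact ⟨1, by simp, by simp [h]⟩
      · exact ⟨b, by simp, h⟩
    choose c hc hdc using this
    refine ⟨c, hc, ?_⟩
    simpa only [hdc, mulVec_smul] using hx
  · rintro ⟨c, hc, hx⟩
    refine ⟨fun i => c i • v, fun i => ?_, by simpa only [mulVec_smul] using hx⟩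
    rcases hc i with h | h | (h : c i = b) <;> simp [h]

theorem abs_apply_sub_le_of_hasSum {E : Type*} [AddCommGroup E] [Module ℝ E]
    [TopologicalSpace E] (H : E →L[ℝ] ℝ) {w : ℕ → E} {c σ : ℕ → ℝ} {b : ℝ} {x : E}
    (hx : HasSum (fun i => c i • w i) x) (hw : ∀ i, H (w i) = σ i)
    (hc : ∀ i, c i ∈ Set.Icc 0 b) (hσ : Summable fun i => |σ i|) :
    |H x - c 0 * σ 0 - b / 2 * ∑' i, σ (i + 1)| ≤ b / 2 * ∑' i, |σ (i + 1)| := by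
  have hHx : HasSum (fun i => c i * σ i) (H x) := by
    simpa only [map_smul, hw, smul_eq_mul] using hx.mapL H
  rw [hHx.tsum_eq.symm, hHx.summable.tsum_eq_zero_add, add_sub_cancel_left]
  exact abs_tsum_mul_sub_le (fun i => hc (i + 1)) ((summable_nat_add_iff 1).2 hσ)

theorem not_isPreconnected_selfAffine_of_gap {n : ℕ} (A : Matrix (Fin n) (Fin n) ℤ)
    (v : Fin n → ℝ) {b : ℝ} (hb : 1 ≤ b) (H : (Fin n → ℝ) →L[ℝ] ℝ) {σ : ℕ → ℝ}
    (hσ : ∀ i, H ((matR A)⁻¹ ^ (i + 1) *ᵥ v) = σ i) (hσ0 : σ 0 = 1)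
    (hσs : Summable fun i => |σ i|) {μ κ : ℝ} (hμ : μ ∈ ({0, 1, b} : Set ℝ))
    (hκ : κ ∈ ({0, 1, b} : Set ℝ)) (hsplit : ∀ c ∈ ({0, 1, b} : Set ℝ), c ≤ μ ∨ κ ≤ c)
    (hgap : b * ∑' i, |σ (i + 1)| < κ - μ) :
    ¬ IsPreconnected (selfAffine A {0, v, b • v}) := by
  set m := b / 2 * ∑' i, σ (i + 1)
  set r := b / 2 * ∑' i, |σ (i + 1)| with hr
  have hdigits : ({0, 1, b} : Set ℝ) ⊆ Set.Icc 0 b := by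
    rintro c (rfl | rfl | rfl : c = 0 ∨ c = 1 ∨ c = b) <;> constructor <;> linarith
  have hproj {x : Fin n → ℝ} {c : ℕ → ℝ} (hc : ∀ i, c i ∈ ({0, 1, b} : Set ℝ))
      (hx : HasSum (fun i => c i • ((matR A)⁻¹ ^ (i + 1) *ᵥ v)) x) : |H x - c 0 - m| ≤ r := by
    have := abs_apply_sub_le_of_hasSum H hx hσ (fun i => hdigits (hc i)) hσs
    rwa [hσ0, mul_one] at this
  have hfirst {c₀ : ℝ} (hc₀ : c₀ ∈ ({0, 1, b} : Set ℝ)) :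
      ∃ x ∈ selfAffine A {0, v, b • v}, |H x - c₀ - m| ≤ r := by
    let c : ℕ → ℝ := fun i => if i = 0 then c₀ else 0
    have hc (i : ℕ) : c i ∈ ({0, 1, b} : Set ℝ) := by
      by_cases h : i = 0 <;> simp [c, h, hc₀]
    have hx : HasSum (fun i => c i • ((matR A)⁻¹ ^ (i + 1) *ᵥ v))
        (c₀ • ((matR A)⁻¹ ^ (0 + 1) *ᵥ v)) := by
      convert hasSum_ite_eq 0 (c₀ • ((matR A)⁻¹ ^ (0 + 1) *ᵥ v)) using 2 with i
      by_cases h : i = 0 <;> simp [c, h]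
    exact ⟨_, mem_selfAffine_iff.2 ⟨c, hc, hx⟩, hproj hc hx⟩
  obtain ⟨y, hy, hyμ⟩ := hfirst hμ
  obtain ⟨z, hz, hzκ⟩ := hfirst hκ
  have hgap' : 2 * r < κ - μ := by rw [hr]; linarith
  refine not_isPreconnected_of_continuous_split H.continuous (α := μ + m + r) (β := κ + m - r)
    (by linarith) (fun x hx => ?_) hy (by linarith [(abs_le.1 hyμ).2]) hz
    (by linarith [(abs_le.1 hzκ).1])
  obtain ⟨c, hc, hxc⟩ := mem_selfAffine_iff.1 hx
  have := abs_le.1 (hproj hc hxc)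
  rcases hsplit _ (hc 0) with h | h
  · left; linarith
  · right; linarith

theorem exists_matR_mul_self_eq {A : Matrix (Fin 2) (Fin 2) ℤ}
    (hchar : A.charpoly = X ^ 2 + X + C 3 ∨ A.charpoly = X ^ 2 - X + C 3) :
    ∃ t : ℝ, t ^ 2 = 1 ∧ matR A * matR A = t • matR A - (3 : ℝ) • 1 := by
  obtain ⟨t, ht, h⟩ : ∃ t : ℤ, t ^ 2 = 1 ∧ A.charpoly = X ^ 2 - C t * X + C 3 := by
    rcases hchar with h | h
    · exact ⟨-1, by norm_num, by rw [h]; simp⟩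
    · exact ⟨1, by norm_num, by rw [h]; simp⟩
  refine ⟨t, by exact_mod_cast ht, mul_self_eq_of_charpoly_eq ?_⟩
  rw [matR, show (fun a : ℤ => (a : ℝ)) = Int.castRingHom ℝ from rfl, charpoly_map, h]
  simp [map_ofNat]

theorem apply_inv_pow_mulVec_eq_orbitSeq {B : Matrix (Fin 2) (Fin 2) ℝ} {t : ℝ}
    (ht : t ^ 2 = 1) (hB : B * B = t • B - (3 : ℝ) • 1) {v : Fin 2 → ℝ}
    (H : (Fin 2 → ℝ) →L[ℝ] ℝ) (hHv : H v = t) (hHBv : H (B *ᵥ v) = -2) (k : ℕ) :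
    H (B⁻¹ ^ (k + 1) *ᵥ v) = orbitSeq t k := by
  have hdet := isUnit_det_of_mul_self_eq three_ne_zero hB
  have hrel (j : ℕ) :
      3 * H (B⁻¹ ^ (j + 2) *ᵥ v) = t * H (B⁻¹ ^ (j + 1) *ᵥ v) - H (B⁻¹ ^ j *ᵥ v) := by
    have := mulVec_mulVec_eq_of_mul_self_eq hB (B⁻¹ ^ (j + 2) *ᵥ v)
    rw [mulVec_inv_pow_succ_mulVec hdet, mulVec_inv_pow_succ_mulVec hdet] at this
    have := congrArg H this
    simp only [map_sub, map_smul, smul_eq_mul] at this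
    linarith
  have hMv : H (B⁻¹ *ᵥ v) = 1 := by
    have := congrArg H (mulVec_mulVec_eq_of_mul_self_eq hB (B⁻¹ *ᵥ v))
    rw [← pow_one B⁻¹, mulVec_inv_pow_succ_mulVec hdet, pow_zero, one_mulVec] at this
    simp only [pow_one, map_sub, map_smul, smul_eq_mul, hHv, hHBv] at this
    linear_combination this / 3 + ht / 3
  induction k using Nat.twoStepInduction with
  | zero => simpa [orbitSeq] using hMv
  | one =>
    have := hrel 0
    simp only [zero_add, pow_one, pow_zero, one_mulVec, hMv, hHv] at this
    rw [show orbitSeq t 1 = 0 from rfl]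
    linarith
  | more k ih₀ ih₁ =>
    have := hrel (k + 1)
    rw [ih₀, ih₁] at this
    rw [orbitSeq]
    linarith

theorem disconnected_case_7_general (A : Matrix (Fin 2) (Fin 2) ℤ)
    (hchar : A.charpoly = X ^ 2 + X + C 3 ∨ A.charpoly = X ^ 2 - X + C 3)
    (b : ℝ) (hb : 1 < b) (v : Fin 2 → ℝ)
    (hv : LinearIndependent ℝ ![v, (matR A).mulVec v])
    (hrange : b ≥ 67 / 25 ∨ b ≤ 67 / 42) :
    ¬ IsConnected (selfAffine A {0, v, b • v}) := by
  obtain ⟨t, ht, hA2⟩ := exists_matR_mul_self_eq hchar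
  obtain ⟨H, hH⟩ := exists_continuousLinearMap_apply_eq hv (by simp) ![t, -2]
  have hσ := apply_inv_pow_mulVec_eq_orbitSeq ht hA2 H (hH 0) (hH 1)
  obtain ⟨hsum, hS⟩ := summable_abs_orbitSeq_and_tsum_lt ht
  have hmargin : 0 < b * (42 / 67 - ∑' i, |orbitSeq t (i + 1)|) := by nlinarith
  intro hT
  rcases hrange with hbig | hsmall
  · refine not_isPreconnected_selfAffine_of_gap A v hb.le H hσ rfl hsum (μ := 1) (κ := b)
      (by simp) (by simp) (fun c hc => ?_) (by nlinarith) hT.isPreconnected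
    rcases hc with rfl | rfl | rfl <;> simp
  · refine not_isPreconnected_selfAffine_of_gap A v hb.le H hσ rfl hsum (μ := 0) (κ := 1)
      (by simp) (by simp) (fun c hc => ?_) (by nlinarith) hT.isPreconnected
    rcases hc with rfl | rfl | rfl <;> simp [hb.le]

/-- For an expanding `A ∈ M₂(ℤ)` with characteristic polynomial `x² ± x + 3`
and digit set `{0, 1, b}v`, `b > 1`: if `b ≥ 67/25` or `b ≤ 67/42` then `T(A,D)` is disconnected. -/
theorem disconnected_case_7 (A : Matrix (Fin 2) (Fin 2) ℤ) (hA : IsExpanding A)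
    (hchar : A.charpoly = X ^ 2 + X + C 3 ∨ A.charpoly = X ^ 2 - X + C 3)
    (b : ℝ) (hb : 1 < b) (v : Fin 2 → ℝ)
    (hv : LinearIndependent ℝ ![v, (matR A).mulVec v])
    (hrange : b ≥ 67 / 25 ∨ b ≤ 67 / 42) :
    ¬ IsConnected (selfAffine A {0, v, b • v}) :=
  disconnected_case_7_general A hchar b hb v hv hrange
end

section
/- Let A ∈ M₂(ℤ) be an expanding matrix whose characteristic polynomial is f(x) = x² + 2x + 3 or f(x) = x² − 2x + 3, and let D = {0, 1, b}v where b ∈ ℝ, b > 1, and v ∈ ℝ² is such that {v, Av} is linearly independent. If b ≥ 37/10 or b ≤ 37/27, then the self-affine set T(A, D) is disconnected. -/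
/-
Write `λ = s + i√2`, `s = ±1`, for an eigenvalue of `A`. By Cayley–Hamilton `A² = 2sA − 3`, so the
real-linear isomorphism `ℝ² ≃ ℂ` with `v ↦ 1`, `Av ↦ λ` conjugates `A` to multiplication by `λ` and
carries `T(A, D)` onto the set of expansions `∑ λ^{-(i+1)} cᵢ` with digits `cᵢ ∈ {0, 1, b}`.
Split this set according to the first digit. If two expansions have digit differences `eᵢ`, then
`λ²(z − w) = λe₀ + e₁ + ∑ λ^{-(n+1)} e_{n+2}` with `e₁` real, so `3|z − w| ≥ √2|e₀| − bK`, where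
`K = ∑_{j≥1} |Im λ^{-j}|`. The hypothesis on `b` yields a split with `|e₀| ≥ 27b/37`, while
`K < 27√2/37`: the first ten terms are `√2|U_j|/3^j` for the Lucas sequence `U` of `x² − 2sx + 3`,
and the tail is geometric. Hence the two pieces lie at positive distance from each other.
-/

open Matrix Polynomial

theorem matR_sq_of_charpoly {n : ℕ} {A : Matrix (Fin n) (Fin n) ℤ} {P Q : ℤ}
    (h : A.charpoly = X ^ 2 - C P * X + C Q) :
    matR A ^ 2 = (P : ℝ) • matR A - (Q : ℝ) • 1 := by
  have hCH := aeval_self_charpoly (matR A)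
  rw [matR, show A.map (fun a => (a : ℝ)) = A.map (Int.castRingHom ℝ) from rfl, charpoly_map, h]
    at hCH
  simp only [Polynomial.map_add, Polynomial.map_sub, Polynomial.map_mul, Polynomial.map_pow,
    map_X, map_C, map_add, map_sub, map_mul, map_pow, aeval_X, aeval_C,
    Algebra.algebraMap_eq_smul_one, Int.coe_castRingHom, smul_mul_assoc, one_mul] at hCH
  rw [matR, ← sub_eq_zero, ← hCH]
  module

theorem exists_sign_matR_sq {A : Matrix (Fin 2) (Fin 2) ℤ}
    (hchar : A.charpoly = X ^ 2 + C 2 * X + C 3 ∨ A.charpoly = X ^ 2 - C 2 * X + C 3) :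
    ∃ s : ℝ, (s = 1 ∨ s = -1) ∧ matR A ^ 2 = (2 * s) • matR A - (3 : ℝ) • 1 := by
  rcases hchar with h | h
  · refine ⟨-1, .inr rfl, ?_⟩
    have := matR_sq_of_charpoly (P := -2) (Q := 3) (by rw [h, map_neg]; ring)
    norm_num at this ⊢
    exact this
  · refine ⟨1, .inl rfl, ?_⟩
    have := matR_sq_of_charpoly (P := 2) (Q := 3) h
    norm_num at this ⊢
    exact this

theorem mul_inv_of_sq_eq {ι K : Type*} [Fintype ι] [DecidableEq ι] [Field K]
    {M : Matrix ι ι K} {P Q : K} (hQ : Q ≠ 0) (hM : M ^ 2 = P • M - Q • 1) : M * M⁻¹ = 1 := by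
  refine M.mul_nonsing_inv (isUnit_det_of_right_inverse (B := Q⁻¹ • (P • 1 - M)) ?_)
  rw [mul_smul_comm, mul_sub, mul_smul_comm, mul_one, ← sq, hM, sub_sub_cancel, smul_smul,
    inv_mul_cancel₀ hQ, one_smul]

theorem apply_inv_pow_mulVec {ι R K : Type*} [Fintype ι] [DecidableEq ι] [CommRing R]
    [GroupWithZero K] {M : Matrix ι ι R} (hM : M * M⁻¹ = 1) {f : (ι → R) → K} {ζ : K}
    (hζ : ζ ≠ 0) (hf : ∀ x, f (M *ᵥ x) = ζ * f x) (k : ℕ) (x : ι → R) :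
    f ((M⁻¹ ^ k) *ᵥ x) = ζ⁻¹ ^ k * f x := by
  induction k generalizing x with
  | zero => simp
  | succ k ih =>
    have hinv : f (M⁻¹ *ᵥ x) = ζ⁻¹ * f x := by
      rw [eq_inv_mul_iff_mul_eq₀ hζ, ← hf, mulVec_mulVec, hM, one_mulVec]
    rw [pow_succ, ← mulVec_mulVec, ih, hinv, pow_succ, mul_assoc]

theorem exists_continuousLinearEquiv_mulVec_eq_mul {M : Matrix (Fin 2) (Fin 2) ℝ}
    {v : Fin 2 → ℝ} (hv : LinearIndependent ℝ ![v, M *ᵥ v]) {P Q : ℝ}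
    (hM : M ^ 2 = P • M - Q • 1) {ζ : ℂ} (hζ : ζ ^ 2 = P * ζ - Q) (him : ζ.im ≠ 0) :
    ∃ e : (Fin 2 → ℝ) ≃L[ℝ] ℂ, e v = 1 ∧ ∀ x, e (M *ᵥ x) = ζ * e x := by
  have hζind : LinearIndependent ℝ ![(1 : ℂ), ζ] := by
    refine LinearIndependent.pair_iff.mpr fun s t hst => ?_
    have hre := congrArg Complex.re hst
    have hst_im := congrArg Complex.im hst
    simp only [Complex.add_re, Complex.add_im, Complex.real_smul, Complex.re_ofReal_mul,
      Complex.im_ofReal_mul, Complex.ofReal_re, Complex.ofReal_im, Complex.zero_re,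
      Complex.zero_im, mul_one, zero_add] at hre hst_im
    have ht : t = 0 := (mul_eq_zero.mp hst_im).resolve_right him
    subst ht
    simpa using hre
  let B := basisOfLinearIndependentOfCardEqFinrank hv (by simp)
  let C := basisOfLinearIndependentOfCardEqFinrank hζind (by simp)
  let e := B.equiv C (Equiv.refl _)
  have hB : ⇑B = ![v, M *ᵥ v] := coe_basisOfLinearIndependentOfCardEqFinrank _ _
  have he (i : Fin 2) : e (B i) = ![1, ζ] i := by
    simp [e, C, B.equiv_apply]
  have he0 : e v = 1 := by simpa [hB] using he 0
  have he1 : e (M *ᵥ v) = ζ := by simpa [hB] using he 1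
  have hlin : (e : (Fin 2 → ℝ) →ₗ[ℝ] ℂ) ∘ₗ M.mulVecLin = LinearMap.mulLeft ℝ ζ ∘ₗ e := by
    refine B.ext (Fin.forall_fin_two.mpr ⟨?_, ?_⟩) <;>
      simp only [hB, LinearMap.comp_apply, mulVecLin_apply, LinearMap.mulLeft_apply,
        LinearEquiv.coe_coe, Matrix.cons_val_zero, Matrix.cons_val_one]
    · rw [he0, he1, mul_one]
    · rw [mulVec_mulVec, ← sq, hM, sub_mulVec, smul_mulVec, smul_mulVec, one_mulVec, map_sub,
        map_smul, map_smul, he0, he1, Complex.real_smul, Complex.real_smul, mul_one, ← sq, hζ]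
  exact ⟨e.toContinuousLinearEquiv, he0, LinearMap.congr_fun hlin⟩

def radixExpansions (μ : ℂ) (D : Set ℝ) : Set ℂ :=
  {z | ∃ c : ℕ → ℝ, (∀ i, c i ∈ D) ∧ HasSum (fun i => μ ^ (i + 1) * c i) z}

theorem image_selfAffine {n : ℕ} {A : Matrix (Fin n) (Fin n) ℤ} (e : (Fin n → ℝ) ≃L[ℝ] ℂ)
    {v : Fin n → ℝ} (hv : e v = 1) {μ : ℂ} (he : ∀ k x, e (((matR A)⁻¹ ^ k) *ᵥ x) = μ ^ k * e x)
    (D : Set ℝ) : e '' selfAffine A ((· • v) '' D) = radixExpansions μ D := by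
  have hterm (c : ℕ → ℝ) (i : ℕ) : e (((matR A)⁻¹ ^ (i + 1)) *ᵥ (c i • v)) = μ ^ (i + 1) * c i := by
    rw [he, map_smul, hv, Complex.real_smul, mul_one]
  ext z
  constructor
  · rintro ⟨x, ⟨d, hd, hx⟩, rfl⟩
    choose c hcD hc using hd
    refine ⟨c, hcD, ?_⟩
    simp_rw [← hterm, hc]
    exact e.hasSum'.mpr hx
  · rintro ⟨c, hcD, hz⟩
    refine ⟨e.symm z, ⟨fun i => c i • v, fun i => ⟨c i, hcD i, rfl⟩, ?_⟩, e.apply_symm_apply z⟩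
    exact e.hasSum.mp (by simpa only [hterm] using hz)

noncomputable def lam (s : ℝ) : ℂ := ⟨s, √2⟩

theorem lam_im (s : ℝ) : (lam s).im = √2 := rfl

theorem lam_sq {s : ℝ} (hs : s = 1 ∨ s = -1) : lam s ^ 2 = (2 * s : ℝ) * lam s - (3 : ℝ) := by
  have hs2 : s ^ 2 = 1 := by rcases hs with rfl | rfl <;> norm_num
  have h2 := Real.mul_self_sqrt (show (0 : ℝ) ≤ 2 by norm_num)
  apply Complex.ext <;> simp [lam, sq] <;> nlinarith

theorem exists_image_selfAffine_eq_radixExpansions {A : Matrix (Fin 2) (Fin 2) ℤ}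
    (hchar : A.charpoly = X ^ 2 + C 2 * X + C 3 ∨ A.charpoly = X ^ 2 - C 2 * X + C 3)
    {v : Fin 2 → ℝ} (hv : LinearIndependent ℝ ![v, matR A *ᵥ v]) (D : Set ℝ) :
    ∃ s : ℝ, (s = 1 ∨ s = -1) ∧ ∃ e : (Fin 2 → ℝ) ≃L[ℝ] ℂ,
      e '' selfAffine A ((· • v) '' D) = radixExpansions (lam s)⁻¹ D := by
  obtain ⟨s, hs, hM⟩ := exists_sign_matR_sq hchar
  have him : (lam s).im ≠ 0 := by rw [lam_im]; positivity
  obtain ⟨e, hev, heM⟩ := exists_continuousLinearEquiv_mulVec_eq_mul hv hM (lam_sq hs) him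
  have heMinv := apply_inv_pow_mulVec (mul_inv_of_sq_eq three_ne_zero hM)
    (fun h => him (by rw [h, Complex.zero_im])) heM
  exact ⟨s, hs, e, image_selfAffine e hev heMinv D⟩

theorem summable_abs_im_pow_succ {μ : ℂ} (hμ : ‖μ‖ < 1) :
    Summable fun j : ℕ => |(μ ^ (j + 1)).im| := by
  refine .of_nonneg_of_le (fun _ => abs_nonneg _) (fun j => ?_)
    ((summable_nat_add_iff 1).mpr (summable_geometric_of_lt_one (norm_nonneg μ) hμ))
  exact (Complex.abs_im_le_norm _).trans_eq (norm_pow _ _)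

theorem abs_im_inv_mul_sub_le_norm_of_hasSum {μ : ℂ} (hμ0 : μ ≠ 0) (hμ : ‖μ‖ < 1)
    {e : ℕ → ℝ} {b : ℝ} (he : ∀ i, |e i| ≤ b) {z : ℂ} (hz : HasSum (fun i => μ ^ (i + 1) * e i) z) :
    |(μ⁻¹).im| * |e 0| - b * ∑' j : ℕ, |(μ ^ (j + 1)).im| ≤ ‖μ⁻¹‖ ^ 2 * ‖z‖ := by
  set R := μ⁻¹ ^ 2 * z - μ⁻¹ * e 0 - e 1 with hR_def
  have hR : HasSum (fun n => μ ^ (n + 1) * e (n + 2)) R := by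
    have h := ((hasSum_nat_add_iff' 2).mpr hz).mul_left (μ⁻¹ ^ 2)
    have hfun : (fun n : ℕ => μ⁻¹ ^ 2 * (μ ^ (n + 2 + 1) * e (n + 2))) =
        fun n => μ ^ (n + 1) * e (n + 2) := by
      ext n; field_simp; ring
    have hval : μ⁻¹ ^ 2 * (z - ∑ i ∈ Finset.range 2, μ ^ (i + 1) * (e i : ℂ)) = R := by
      rw [hR_def, Finset.sum_range_succ, Finset.sum_range_one]; field_simp; ring
    rwa [hfun, hval] at h
  have hRim : |R.im| ≤ b * ∑' j : ℕ, |(μ ^ (j + 1)).im| := by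
    refine (Complex.hasSum_im hR).norm_le_of_bounded
      ((summable_abs_im_pow_succ hμ).hasSum.mul_left b) fun n => ?_
    rw [Real.norm_eq_abs, Complex.im_mul_ofReal, abs_mul, mul_comm]
    exact mul_le_mul_of_nonneg_right (he _) (abs_nonneg _)
  have hzim : (μ⁻¹ ^ 2 * z).im = (μ⁻¹).im * e 0 + R.im := by
    simp [R]
  calc |(μ⁻¹).im| * |e 0| - b * ∑' j : ℕ, |(μ ^ (j + 1)).im|
      ≤ |(μ⁻¹).im * e 0 + R.im| := by
        have h := abs_add_le ((μ⁻¹).im * e 0 + R.im) (-R.im)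
        rw [add_neg_cancel_right, abs_neg, abs_mul] at h
        linarith
    _ = |(μ⁻¹ ^ 2 * z).im| := by rw [hzim]
    _ ≤ ‖μ⁻¹‖ ^ 2 * ‖z‖ := (Complex.abs_im_le_norm _).trans_eq (by rw [norm_mul, norm_pow])

theorem not_isPreconnected_union_of_le_dist {X : Type*} [PseudoMetricSpace X] {P Q : Set X}
    {p q : X} (hp : p ∈ P) (hq : q ∈ Q) {ε : ℝ} (hε : 0 < ε)
    (h : ∀ x ∈ P, ∀ y ∈ Q, ε ≤ dist x y) : ¬ IsPreconnected (P ∪ Q) := by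
  intro hPQ
  have hε2 := half_pos hε
  obtain ⟨y, -, hyP, hyQ⟩ := hPQ _ _ Metric.isOpen_thickening Metric.isOpen_thickening
    (Set.union_subset_union (Metric.self_subset_thickening hε2 P)
      (Metric.self_subset_thickening hε2 Q))
    ⟨p, .inl hp, Metric.self_subset_thickening hε2 P hp⟩
    ⟨q, .inr hq, Metric.self_subset_thickening hε2 Q hq⟩
  obtain ⟨x, hx, hyx⟩ := Metric.mem_thickening_iff.mp hyP
  obtain ⟨x', hx', hyx'⟩ := Metric.mem_thickening_iff.mp hyQ
  linarith [h x hx x' hx', dist_triangle_left x x' y]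

theorem not_isPreconnected_radixExpansions {μ : ℂ} (hμ : ‖μ‖ < 1) {D₁ D₂ : Set ℝ} {b g : ℝ}
    {d₁ d₂ : ℝ} (hD : D₁ ∪ D₂ ⊆ Set.Icc 0 b) (hgap : ∀ x ∈ D₁, ∀ y ∈ D₂, g ≤ |x - y|)
    (hd₁ : d₁ ∈ D₁) (hd₂ : d₂ ∈ D₂)
    (hK : b * ∑' j : ℕ, |(μ ^ (j + 1)).im| < |(μ⁻¹).im| * g) :
    ¬ IsPreconnected (radixExpansions μ (D₁ ∪ D₂)) := by
  have hμ0 : μ ≠ 0 := by rintro rfl; simp at hK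
  have hnorm : 0 < ‖μ⁻¹‖ ^ 2 := pow_pos (norm_pos_iff.mpr (inv_ne_zero hμ0)) 2
  let piece (D' : Set ℝ) : Set ℂ :=
    {z | ∃ c : ℕ → ℝ, (∀ i, c i ∈ D₁ ∪ D₂) ∧ c 0 ∈ D' ∧ HasSum (fun i => μ ^ (i + 1) * c i) z}
  have hunion : radixExpansions μ (D₁ ∪ D₂) = piece D₁ ∪ piece D₂ := by
    ext z
    constructor
    · rintro ⟨c, hc, hz⟩
      exact (hc 0).imp (fun h => ⟨c, hc, h, hz⟩) (fun h => ⟨c, hc, h, hz⟩)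
    · rintro (⟨c, hc, -, hz⟩ | ⟨c, hc, -, hz⟩) <;> exact ⟨c, hc, hz⟩
  have hconst {d : ℝ} (hd : d ∈ D₁ ∪ D₂) (D' : Set ℝ) (hd' : d ∈ D') :
      ∑' i : ℕ, μ ^ (i + 1) * d ∈ piece D' := by
    have hgeo : Summable fun i : ℕ => μ ^ (i + 1) :=
      (summable_nat_add_iff 1).mpr (summable_geometric_of_norm_lt_one hμ)
    exact ⟨fun _ => d, fun _ => hd, hd', (hgeo.mul_right (d : ℂ)).hasSum⟩
  set ε := (|(μ⁻¹).im| * g - b * ∑' j : ℕ, |(μ ^ (j + 1)).im|) / ‖μ⁻¹‖ ^ 2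
  have hε : 0 < ε := div_pos (by linarith) hnorm
  have hsep : ∀ z ∈ piece D₁, ∀ w ∈ piece D₂, ε ≤ dist z w := by
    rintro z ⟨c, hc, hc₁, hz⟩ w ⟨c', hc', hc₂, hw⟩
    have hdiff : ∀ i, |c i - c' i| ≤ b := fun i => by
      obtain ⟨h0, hb⟩ := hD (hc i)
      obtain ⟨h0', hb'⟩ := hD (hc' i)
      exact abs_sub_le_iff.mpr ⟨by linarith, by linarith⟩
    have hsub : HasSum (fun i => μ ^ (i + 1) * ↑(c i - c' i)) (z - w) := by
      simpa only [Complex.ofReal_sub, mul_sub] using hz.sub hw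
    rw [div_le_iff₀ hnorm, dist_eq_norm, mul_comm]
    have := abs_im_inv_mul_sub_le_norm_of_hasSum hμ0 hμ hdiff hsub
    have := mul_le_mul_of_nonneg_left (hgap _ hc₁ _ hc₂) (abs_nonneg (μ⁻¹).im)
    linarith
  rw [hunion]
  exact not_isPreconnected_union_of_le_dist (hconst (.inl hd₁) D₁ hd₁) (hconst (.inr hd₂) D₂ hd₂)
    hε hsep

def lucasU {R : Type*} [CommRing R] (P Q : R) : ℕ → R
  | 0 => 0
  | 1 => 1
  | n + 2 => P * lucasU P Q (n + 1) - Q * lucasU P Q n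

theorem im_pow_eq_lucasU {η : ℂ} {P Q : ℝ} (h : η ^ 2 = P * η - Q) :
    ∀ n, (η ^ n).im = lucasU P Q n * η.im
  | 0 => by simp [lucasU]
  | 1 => by simp [lucasU]
  | n + 2 => by
    have hrec : η ^ (n + 2) = P * η ^ (n + 1) - Q * η ^ n := by
      rw [pow_add, h]; ring
    rw [hrec, Complex.sub_im, Complex.im_ofReal_mul, Complex.im_ofReal_mul,
      im_pow_eq_lucasU h (n + 1), im_pow_eq_lucasU h n, lucasU]
    ring

theorem normSq_lam {s : ℝ} (hs : s = 1 ∨ s = -1) : Complex.normSq (lam s) = 3 := by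
  have hs2 : s ^ 2 = 1 := by rcases hs with rfl | rfl <;> norm_num
  simp only [Complex.normSq_apply, lam, Real.mul_self_sqrt (show (0 : ℝ) ≤ 2 by norm_num)]
  nlinarith

theorem norm_inv_lam_lt {s : ℝ} (hs : s = 1 ∨ s = -1) : ‖(lam s)⁻¹‖ < 10 / 17 := by
  have h : ‖(lam s)⁻¹‖ ^ 2 = 1 / 3 := by
    rw [norm_inv, inv_pow, Complex.sq_norm, normSq_lam hs, one_div]
  nlinarith [norm_nonneg (lam s)⁻¹]

theorem im_inv_lam_pow {s : ℝ} (hs : s = 1 ∨ s = -1) (n : ℕ) :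
    ((lam s)⁻¹ ^ n).im = -(lucasU (2 * s) 3 n * √2 / 3 ^ n) := by
  rw [inv_pow, Complex.inv_im, map_pow, normSq_lam hs, im_pow_eq_lucasU (lam_sq hs), lam_im,
    neg_div]

theorem tsum_abs_im_inv_lam_pow_lt {s : ℝ} (hs : s = 1 ∨ s = -1) :
    ∑' j : ℕ, |((lam s)⁻¹ ^ (j + 1)).im| < 27 / 37 * √2 := by
  have hμ := norm_inv_lam_lt hs
  have hsum := summable_abs_im_pow_succ (hμ.trans (by norm_num))
  have head : ∑ j ∈ Finset.range 10, |((lam s)⁻¹ ^ (j + 1)).im| = 42487 / 59049 * √2 := by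
    simp only [im_inv_lam_pow hs, abs_neg, abs_div, abs_mul, abs_pow, Nat.abs_ofNat,
      Real.sqrt_nonneg, abs_of_nonneg]
    rcases hs with rfl | rfl <;> norm_num [Finset.sum_range_succ, lucasU] <;> ring
  have tail : ∑' j : ℕ, |((lam s)⁻¹ ^ (j + 10 + 1)).im| ≤ (10 / 17) ^ 11 * (1 - 10 / 17)⁻¹ := by
    have hgeo := hasSum_geometric_of_lt_one (r := (10 / 17 : ℝ)) (by norm_num) (by norm_num)
    refine hasSum_le (fun j => ?_) ((summable_nat_add_iff 10).mpr hsum).hasSum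
      (hgeo.mul_left ((10 / 17) ^ 11))
    calc |((lam s)⁻¹ ^ (j + 10 + 1)).im| ≤ ‖(lam s)⁻¹‖ ^ (11 + j) := by
          rw [← norm_pow, show j + 10 + 1 = 11 + j by ring]; exact Complex.abs_im_le_norm _
      _ ≤ (10 / 17) ^ (11 + j) := pow_le_pow_left₀ (norm_nonneg _) hμ.le _
      _ = _ := by rw [pow_add]
  have hsqrt : (1.41 : ℝ) ≤ √2 := by
    rw [Real.le_sqrt (by norm_num) (by norm_num)]; norm_num
  rw [← hsum.sum_add_tsum_nat_add 10, head]
  norm_num at tail ⊢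
  linarith

theorem not_isPreconnected_radixExpansions_inv_lam {s : ℝ} (hs : s = 1 ∨ s = -1)
    {D₁ D₂ : Set ℝ} {b g d₁ d₂ : ℝ} (hD : D₁ ∪ D₂ ⊆ Set.Icc 0 b)
    (hgap : ∀ x ∈ D₁, ∀ y ∈ D₂, g ≤ |x - y|) (hd₁ : d₁ ∈ D₁) (hd₂ : d₂ ∈ D₂) (hb : 0 < b)
    (hg : 27 / 37 * b ≤ g) : ¬ IsPreconnected (radixExpansions (lam s)⁻¹ (D₁ ∪ D₂)) := by
  refine not_isPreconnected_radixExpansions ((norm_inv_lam_lt hs).trans (by norm_num)) hD hgap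
    hd₁ hd₂ ?_
  rw [inv_inv, lam_im, abs_of_nonneg (Real.sqrt_nonneg 2)]
  nlinarith [mul_lt_mul_of_pos_left (tsum_abs_im_inv_lam_pow_lt hs) hb,
    mul_le_mul_of_nonneg_left hg (Real.sqrt_nonneg 2)]

theorem disconnected_case_8_general (A : Matrix (Fin 2) (Fin 2) ℤ)
    (hchar : A.charpoly = X ^ 2 + C 2 * X + C 3 ∨ A.charpoly = X ^ 2 - C 2 * X + C 3)
    (b : ℝ) (hb : 1 < b) (v : Fin 2 → ℝ)
    (hv : LinearIndependent ℝ ![v, (matR A).mulVec v])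
    (hrange : b ≥ 37 / 10 ∨ b ≤ 37 / 27) :
    ¬ IsConnected (selfAffine A {0, v, b • v}) := by
  obtain ⟨s, hs, e, hT⟩ := exists_image_selfAffine_eq_radixExpansions hchar hv {0, 1, b}
  simp only [Set.image_insert_eq, Set.image_singleton, zero_smul, one_smul] at hT
  intro hconn
  have hpre := (hconn.image e e.continuous.continuousOn).isPreconnected
  rw [hT] at hpre
  have hD : ({0, 1, b} : Set ℝ) ⊆ Set.Icc 0 b := by
    simp only [Set.insert_subset_iff, Set.singleton_subset_iff, Set.mem_Icc]
    exact ⟨⟨le_rfl, by linarith⟩, ⟨zero_le_one, hb.le⟩, ⟨by linarith, le_rfl⟩⟩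
  rcases hrange with hr | hr
  · have hgap : ∀ x ∈ ({0, 1} : Set ℝ), ∀ y ∈ ({b} : Set ℝ), b - 1 ≤ |x - y| := by
      rintro x hx y rfl
      rcases hx with rfl | rfl <;> exact le_abs.mpr (.inr (by linarith))
    rw [show ({0, 1, b} : Set ℝ) = {0, 1} ∪ {b} by rw [Set.insert_union, Set.singleton_union]]
      at hpre hD
    exact not_isPreconnected_radixExpansions_inv_lam hs hD hgap (d₁ := 0) (by simp) rfl
      (by linarith) (by linarith) hpre
  · have hgap : ∀ x ∈ ({0} : Set ℝ), ∀ y ∈ ({1, b} : Set ℝ), 1 ≤ |x - y| := by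
      rintro x rfl y hy
      rcases hy with rfl | rfl <;> exact le_abs.mpr (.inr (by linarith))
    rw [← Set.singleton_union] at hpre hD
    exact not_isPreconnected_radixExpansions_inv_lam hs hD hgap rfl (d₂ := 1) (by simp)
      (by linarith) (by linarith) hpre

/-- For an expanding `A ∈ M₂(ℤ)` with characteristic polynomial `x² ± 2x + 3`
and digit set `{0, 1, b}v`, `b > 1`: if `b ≥ 37/10` or `b ≤ 37/27` then `T(A,D)` is disconnected. -/
theorem disconnected_case_8 (A : Matrix (Fin 2) (Fin 2) ℤ) (hA : IsExpanding A)
    (hchar : A.charpoly = X ^ 2 + C 2 * X + C 3 ∨ A.charpoly = X ^ 2 - C 2 * X + C 3)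
    (b : ℝ) (hb : 1 < b) (v : Fin 2 → ℝ)
    (hv : LinearIndependent ℝ ![v, (matR A).mulVec v])
    (hrange : b ≥ 37 / 10 ∨ b ≤ 37 / 27) :
    ¬ IsConnected (selfAffine A {0, v, b • v}) :=
  disconnected_case_8_general A hchar b hb v hv hrange
end

section
/- Let A ∈ M₂(ℤ) be an expanding matrix whose characteristic polynomial is f(x) = x² + 3x + 3 or f(x) = x² − 3x + 3, and let D = {0, 1, b}v where b ∈ ℝ, b > 1, and v ∈ ℝ² is such that {v, Av} is linearly independent. If b ≥ 33/10 or b ≤ 33/23, then the self-affine set T(A, D) is disconnected. -/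
open Matrix Polynomial

/-!
Write `M` for `A` over `ℝ`; then `M² + 3σM + 3 = 0` with `σ = ±1`, and the points of `T` are the
sums `x = ∑ cᵢ M^{-(i+1)} v` with digits `cᵢ ∈ {0, 1, b}`. Take a linear functional `ψ` with
`ψ(M⁻¹v) = 1` and `ψ(M⁻²v) = -σ/3`. The weights `wₖ = ψ(M⁻ᵏv)` satisfy
`w_{k+2} = -σ w_{k+1} - w_k/3`, hence `w_{k+6} = -w_k/27`, and `∑_{k≥2} |wₖ| = 9/13`.
Centring the digits at `b/2`, `ψ(x) - (b/2) ∑_{k≥2} wₖ` lies within `9b/26` of the first digit `c₀`.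
For `b ≥ 33/10` or `b ≤ 33/23` the three windows around `0`, `1`, `b` leave a gap separating the
image of `0` from that of the point with all digits `b`, so the continuous map `ψ` disconnects `T`.
-/

open Finset

theorem hasSum_of_add_eq_smul {E : Type*} [NormedAddCommGroup E] [NormedSpace ℝ E]
    [CompleteSpace E] {f : ℕ → E} {p : ℕ} (hp : 0 < p) {q : ℝ} (hq : |q| < 1)
    (hf : ∀ k, f (k + p) = q • f k) :
    HasSum f ((1 - q)⁻¹ • ∑ i ∈ range p, f i) := by
  set S := ∑ i ∈ range p, ‖f i‖
  have hS : ∀ n, ∑ i ∈ range n, ‖f i‖ ≤ S / (1 - |q|) := by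
    have hle : S ≤ S / (1 - |q|) :=
      le_div_self (sum_nonneg fun _ _ => norm_nonneg _) (by linarith) (by linarith [abs_nonneg q])
    intro n
    induction n using Nat.strong_induction_on with
    | _ n ih =>
      rcases lt_or_ge n p with hn | hn
      · exact (sum_le_sum_of_subset_of_nonneg (range_subset_range.2 hn.le)
          fun _ _ _ => norm_nonneg _).trans hle
      · obtain ⟨m, rfl⟩ := Nat.exists_eq_add_of_le hn
        have hm : ∑ i ∈ range m, ‖f i‖ ≤ S / (1 - |q|) := ih m (by omega)
        have hshift : ∑ i ∈ range m, ‖f (p + i)‖ = |q| * ∑ i ∈ range m, ‖f i‖ := by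
          rw [mul_sum]
          refine sum_congr rfl fun i _ => ?_
          rw [add_comm, hf, norm_smul, Real.norm_eq_abs]
        rw [sum_range_add, hshift]
        have : 0 < 1 - |q| := by linarith
        calc S + |q| * ∑ i ∈ range m, ‖f i‖ ≤ S + |q| * (S / (1 - |q|)) := by
              gcongr
          _ = S / (1 - |q|) := by field_simp; ring
  have hsum : Summable f :=
    Summable.of_norm (summable_of_sum_range_le (fun _ => norm_nonneg _) hS)
  have hsplit := hsum.sum_add_tsum_nat_add p
  simp only [hf, tsum_const_smul''] at hsplit
  have hq1 : 1 - q ≠ 0 := by linarith [le_abs_self q]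
  have hfix : (1 - q) • ∑' i, f i = ∑ i ∈ range p, f i := by
    rw [sub_smul, one_smul, sub_eq_iff_eq_add, hsplit]
  rw [← hfix, smul_smul, inv_mul_cancel₀ hq1, one_smul]
  exact hsum.hasSum

def SatisfiesRecurrence {E : Type*} [AddCommGroup E] [Module ℝ E] (σ : ℝ) (f : ℕ → E) : Prop :=
  ∀ k, f (k + 2) = -σ • f (k + 1) - (3 : ℝ)⁻¹ • f k

namespace SatisfiesRecurrence

variable {E : Type*} [AddCommGroup E] [Module ℝ E] {σ : ℝ} {f g : ℕ → E}

-- `x⁶ + 1/27 = (x² + σx + 1/3)(x⁴ - σx³ + 2x²/3 - σx/3 + 1/9)` once `σ² = 1`.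
theorem add_six (hσ : σ ^ 2 = 1) (hf : SatisfiesRecurrence σ f) (k : ℕ) :
    f (k + 6) = -(27 : ℝ)⁻¹ • f k := by
  have h0 := hf k
  have h1 := hf (k + 1)
  have h2 := hf (k + 2)
  have h3 := hf (k + 3)
  have h4 := hf (k + 4)
  linear_combination (norm := module) h4 - σ • h3 + (2 / 3 : ℝ) • h2 - (σ / 3) • h1 +
    (9 : ℝ)⁻¹ • h0 + hσ • (f (k + 4) + (3 : ℝ)⁻¹ • f (k + 2))

theorem ext (hf : SatisfiesRecurrence σ f) (hg : SatisfiesRecurrence σ g) (h0 : f 0 = g 0)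
    (h1 : f 1 = g 1) : ∀ k, f k = g k
  | 0 => h0
  | 1 => h1
  | k + 2 => by rw [hf, hg, ext hf hg h0 h1 k, ext hf hg h0 h1 (k + 1)]

theorem map {F : Type*} [AddCommGroup F] [Module ℝ F] (hf : SatisfiesRecurrence σ f)
    (ψ : E →ₗ[ℝ] F) :
    SatisfiesRecurrence σ (fun k => ψ (f k)) := fun k => by simp [hf k]

theorem summable {E : Type*} [NormedAddCommGroup E] [NormedSpace ℝ E]
    [CompleteSpace E] {f : ℕ → E} (hσ : σ ^ 2 = 1) (hf : SatisfiesRecurrence σ f) :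
    Summable f :=
  (hasSum_of_add_eq_smul (by norm_num) (by norm_num [abs_of_pos]) (hf.add_six hσ)).summable

end SatisfiesRecurrence

theorem satisfiesRecurrence_pow_mulVec {n : ℕ} {N : Matrix (Fin n) (Fin n) ℝ} {σ : ℝ}
    (hN : N ^ 2 = -σ • N - (3 : ℝ)⁻¹ • 1) (w : Fin n → ℝ) :
    SatisfiesRecurrence σ (fun k => N ^ k *ᵥ w) := fun k => by
  beta_reduce
  rw [pow_add, hN, pow_add, pow_one]
  simp [mul_sub, Matrix.sub_mulVec, Matrix.smul_mulVec, Matrix.neg_mulVec]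

-- `weight σ k = ψ (M⁻ᵏ v)` for the functional `ψ` with `ψ v = -2σ` and `ψ (M⁻¹ v) = 1`.
noncomputable def weight (σ : ℝ) : ℕ → ℝ
  | 0 => -2 * σ
  | 1 => 1
  | k + 2 => -σ * weight σ (k + 1) - 3⁻¹ * weight σ k

theorem satisfiesRecurrence_weight (σ : ℝ) : SatisfiesRecurrence σ (weight σ) := fun _ => rfl

theorem hasSum_abs_weight {σ : ℝ} (hσ : σ ^ 2 = 1) :
    HasSum (fun k => |weight σ (k + 2)|) (9 / 13) := by
  have hperiod (k : ℕ) : |weight σ (k + 6 + 2)| = (27 : ℝ)⁻¹ • |weight σ (k + 2)| := by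
    rw [show k + 6 + 2 = k + 2 + 6 by ring, (satisfiesRecurrence_weight σ).add_six hσ, smul_eq_mul,
      smul_eq_mul, abs_mul]
    norm_num
  have hval : (1 - (27 : ℝ)⁻¹)⁻¹ • ∑ i ∈ range 6, |weight σ (i + 2)| = 9 / 13 := by
    obtain rfl | rfl := sq_eq_one_iff.1 hσ <;> norm_num [weight, sum_range_succ]
  simpa only [hval] using hasSum_of_add_eq_smul (f := fun k => |weight σ (k + 2)|) (p := 6)
    (by norm_num) (by norm_num [abs_of_pos]) hperiod

theorem abs_sub_half_mul_le {c s : ℕ → ℝ} {b y z a : ℝ} (hc : ∀ i, c i ∈ Set.Icc 0 b)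
    (hy : HasSum (fun i => c i * s i) y) (hz : HasSum s z) (ha : HasSum (fun i => |s i|) a) :
    |y - b / 2 * z| ≤ b / 2 * a := by
  have hcentered : HasSum (fun i => (c i - b / 2) * s i) (y - b / 2 * z) := by
    simpa only [sub_mul] using hy.sub (hz.mul_left (b / 2))
  refine hcentered.norm_le_of_bounded (ha.mul_left (b / 2)) fun i => ?_
  rw [Real.norm_eq_abs, abs_mul]
  have : |c i - b / 2| ≤ b / 2 := abs_sub_le_iff.2 ⟨by linarith [(hc i).2], by linarith [(hc i).1]⟩
  exact mul_le_mul_of_nonneg_right this (abs_nonneg _)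

theorem matR_sq_add_eq_zero {n : ℕ} (A : Matrix (Fin n) (Fin n) ℤ) {a c : ℤ}
    (h : A.charpoly = X ^ 2 + C a * X + C c) :
    matR A ^ 2 + (a : ℝ) • matR A + (c : ℝ) • 1 = 0 := by
  have hCH := Matrix.aeval_self_charpoly (matR A)
  rw [matR, show (fun a : ℤ => (a : ℝ)) = Int.castRingHom ℝ from rfl, charpoly_map, h] at hCH
  simpa [Algebra.smul_def, matR] using hCH

section
variable {n : ℕ} {M : Matrix (Fin n) (Fin n) ℝ} {σ : ℝ}

theorem exists_sign_of_charpoly {A : Matrix (Fin n) (Fin n) ℤ}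
    (hchar : A.charpoly = X ^ 2 + C 3 * X + C 3 ∨ A.charpoly = X ^ 2 - C 3 * X + C 3) :
    ∃ σ : ℝ, σ ^ 2 = 1 ∧ matR A ^ 2 + (3 * σ) • matR A + (3 : ℝ) • 1 = 0 := by
  rcases hchar with h | h
  · exact ⟨1, by norm_num, by linear_combination (norm := module) matR_sq_add_eq_zero A h⟩
  · have h' : A.charpoly = X ^ 2 + C (-3) * X + C 3 := by rw [h, C_neg]; ring
    exact ⟨-1, by norm_num, by linear_combination (norm := module) matR_sq_add_eq_zero A h'⟩

theorem inv_eq_of_sq_add_eq_zero (hM : M ^ 2 + (3 * σ) • M + (3 : ℝ) • 1 = 0) :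
    M⁻¹ = -σ • 1 - (3 : ℝ)⁻¹ • M := by
  refine Matrix.inv_eq_left_inv ?_
  rw [sub_mul, smul_mul_assoc, smul_mul_assoc, one_mul, ← sq]
  linear_combination (norm := module) -(3 : ℝ)⁻¹ • hM

theorem inv_sq_eq_of_sq_add_eq_zero (hM : M ^ 2 + (3 * σ) • M + (3 : ℝ) • 1 = 0) :
    M⁻¹ ^ 2 = -σ • M⁻¹ - (3 : ℝ)⁻¹ • 1 := by
  rw [inv_eq_of_sq_add_eq_zero hM, sq, sub_mul, mul_sub, mul_sub]
  simp only [smul_mul_smul_comm, one_mul, mul_one]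
  rw [← sq M]
  linear_combination (norm := module) (9 : ℝ)⁻¹ • hM

theorem summable_inv_pow_mulVec (hσ : σ ^ 2 = 1) (hM : M ^ 2 + (3 * σ) • M + (3 : ℝ) • 1 = 0)
    (v : Fin n → ℝ) : Summable fun i => M⁻¹ ^ (i + 1) *ᵥ v :=
  (summable_nat_add_iff 1).2
    ((satisfiesRecurrence_pow_mulVec (inv_sq_eq_of_sq_add_eq_zero hM) v).summable hσ)

theorem abs_map_sub_first_digit_le (hσ : σ ^ 2 = 1) (hM : M ^ 2 + (3 * σ) • M + (3 : ℝ) • 1 = 0)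
    (ψ : (Fin n → ℝ) →ₗ[ℝ] ℝ) {v : Fin n → ℝ} (hψ₀ : ψ v = -2 * σ) (hψ₁ : ψ (M *ᵥ v) = 3)
    {b : ℝ} {c : ℕ → ℝ} (hc : ∀ i, c i ∈ Set.Icc 0 b) {x : Fin n → ℝ}
    (hx : HasSum (fun i => c i • M⁻¹ ^ (i + 1) *ᵥ v) x) :
    |ψ x - b / 2 * ∑' k, weight σ (k + 2) - c 0| ≤ 9 * b / 26 := by
  have hψ₁' : ψ (M⁻¹ *ᵥ v) = 1 := by
    rw [inv_eq_of_sq_add_eq_zero hM, sub_mulVec, smul_mulVec, smul_mulVec, one_mulVec, map_sub,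
      map_smul, map_smul, hψ₀, hψ₁, smul_eq_mul, smul_eq_mul]
    linear_combination 2 * hσ
  have hweight : ∀ k, ψ (M⁻¹ ^ k *ᵥ v) = weight σ k :=
    ((satisfiesRecurrence_pow_mulVec (inv_sq_eq_of_sq_add_eq_zero hM) v).map ψ).ext
      (satisfiesRecurrence_weight σ) (by simpa [weight] using hψ₀) (by simpa [weight] using hψ₁')
  have hψx : HasSum (fun i => c i * weight σ (i + 1)) (ψ x) := by
    simpa only [Function.comp_def, map_smul, smul_eq_mul, hweight]
      using hx.map ψ ψ.continuous_of_finiteDimensional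
  have htail : HasSum (fun i => c (i + 1) * weight σ (i + 2)) (ψ x - c 0) := by
    simpa [weight] using (hasSum_nat_add_iff' 1).2 hψx
  have := abs_sub_half_mul_le (fun i => hc (i + 1)) htail
    ((summable_nat_add_iff 2).2 ((satisfiesRecurrence_weight σ).summable hσ)).hasSum
    (hasSum_abs_weight hσ)
  rw [sub_right_comm]
  linarith

end

theorem LinearIndependent.exists_linearMap_apply_eq {K V ι : Type*} [Field K] [AddCommGroup V]
    [Module K V] [Fintype ι] [Nonempty ι] {u : ι → V} (hu : LinearIndependent K u)
    (hcard : Fintype.card ι = Module.finrank K V) (a : ι → K) :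
    ∃ ψ : V →ₗ[K] K, ∀ i, ψ (u i) = a i := by
  let B := basisOfLinearIndependentOfCardEqFinrank hu hcard
  refine ⟨B.constr K a, fun i => ?_⟩
  simpa [B] using B.constr_basis K a i

theorem exists_continuous_abs_sub_first_digit_le {M : Matrix (Fin 2) (Fin 2) ℝ} {σ : ℝ}
    (hσ : σ ^ 2 = 1) (hM : M ^ 2 + (3 * σ) • M + (3 : ℝ) • 1 = 0) {v : Fin 2 → ℝ}
    (hv : LinearIndependent ℝ ![v, M *ᵥ v]) (b : ℝ) :
    ∃ g : (Fin 2 → ℝ) → ℝ, Continuous g ∧ ∀ c : ℕ → ℝ, (∀ i, c i ∈ Set.Icc 0 b) →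
      ∀ x, HasSum (fun i => c i • M⁻¹ ^ (i + 1) *ᵥ v) x → |g x - c 0| ≤ 9 * b / 26 := by
  obtain ⟨ψ, hψ⟩ := hv.exists_linearMap_apply_eq (by simp) ![-2 * σ, 3]
  exact ⟨fun x => ψ x - b / 2 * ∑' k, weight σ (k + 2),
    ψ.continuous_of_finiteDimensional.sub continuous_const,
    fun c hc x hx => abs_map_sub_first_digit_le hσ hM ψ (hψ 0) (hψ 1) hc hx⟩

theorem not_isPreconnected_of_ne {X : Type*} [TopologicalSpace X] {T : Set X} {g : X → ℝ}
    (hg : Continuous g) {θ : ℝ} (hθ : ∀ x ∈ T, g x ≠ θ) {x₀ x₁ : X} (h₀ : x₀ ∈ T) (h₁ : x₁ ∈ T)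
    (hlt : g x₀ < θ) (hgt : θ < g x₁) : ¬ IsPreconnected T := fun hT => by
  obtain ⟨x, hx, rfl⟩ := hT.intermediate_value h₀ h₁ hg.continuousOn ⟨hlt.le, hgt.le⟩
  exact hθ x hx rfl

theorem mem_selfAffine_image_smul_iff {n : ℕ} {A : Matrix (Fin n) (Fin n) ℤ} {S : Set ℝ}
    {v x : Fin n → ℝ} :
    x ∈ selfAffine A ((· • v) '' S) ↔
      ∃ c : ℕ → ℝ, (∀ i, c i ∈ S) ∧ HasSum (fun i => c i • (matR A)⁻¹ ^ (i + 1) *ᵥ v) x := by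
  constructor
  · rintro ⟨d, hd, hx⟩
    choose c hc hdc using hd
    exact ⟨c, hc, by simpa [← hdc, mulVec_smul] using hx⟩
  · rintro ⟨c, hc, hx⟩
    exact ⟨fun i => c i • v, fun i => ⟨c i, hc i, rfl⟩, by simpa [mulVec_smul] using hx⟩

theorem not_isPreconnected_selfAffine {n : ℕ} {A : Matrix (Fin n) (Fin n) ℤ} {v : Fin n → ℝ}
    (hsum : Summable fun i => (matR A)⁻¹ ^ (i + 1) *ᵥ v) {S : Set ℝ} {b r θ : ℝ} (h0 : 0 ∈ S)
    (hbS : b ∈ S) {g : (Fin n → ℝ) → ℝ} (hg : Continuous g)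
    (hwindow : ∀ c : ℕ → ℝ, (∀ i, c i ∈ S) →
      ∀ x, HasSum (fun i => c i • (matR A)⁻¹ ^ (i + 1) *ᵥ v) x → |g x - c 0| ≤ r)
    (hθ₀ : 0 < θ) (hθb : θ < b) (hθ : ∀ s ∈ S, r < |θ - s|) :
    ¬ IsPreconnected (selfAffine A ((· • v) '' S)) := by
  have hzero : HasSum (fun i => (0 : ℝ) • (matR A)⁻¹ ^ (i + 1) *ᵥ v) 0 := by simp
  have hfull := (hsum.const_smul b).hasSum
  have hnear₀ := abs_le.1 (hwindow (fun _ => 0) (fun _ => h0) _ hzero)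
  have hnear_b := abs_le.1 (hwindow (fun _ => b) (fun _ => hbS) _ hfull)
  have hfar₀ := hθ 0 h0
  have hfar_b := hθ b hbS
  rw [sub_zero, abs_of_pos hθ₀] at hfar₀
  rw [abs_of_neg (by linarith)] at hfar_b
  refine not_isPreconnected_of_ne hg (θ := θ) (fun x hx hxθ => ?_)
    (mem_selfAffine_image_smul_iff.2 ⟨_, fun _ => h0, hzero⟩)
    (mem_selfAffine_image_smul_iff.2 ⟨_, fun _ => hbS, hfull⟩) (by linarith) (by linarith)
  obtain ⟨c, hc, hcx⟩ := mem_selfAffine_image_smul_iff.1 hx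
  exact (hwindow c hc x hcx).not_gt (hxθ ▸ hθ _ (hc 0))

theorem exists_far_from_digits {b : ℝ} (hb : 1 < b) (hrange : b ≥ 33 / 10 ∨ b ≤ 33 / 23) :
    ∃ θ : ℝ, 0 < θ ∧ θ < b ∧ ∀ c ∈ ({0, 1, b} : Set ℝ), 9 * b / 26 < |θ - c| := by
  -- `θ = (1 + b)/2` works for `b > 13/4`, and `θ = 1/2` for `13/17 < b < 13/9`.
  rcases hrange with hr | hr
  · refine ⟨(1 + b) / 2, by linarith, by linarith, ?_⟩
    rintro c (rfl | rfl | rfl)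
    · exact lt_abs.2 (Or.inl (by linarith))
    · exact lt_abs.2 (Or.inl (by linarith))
    · exact lt_abs.2 (Or.inr (by linarith))
  · refine ⟨1 / 2, by linarith, by linarith, ?_⟩
    rintro c (rfl | rfl | rfl)
    · exact lt_abs.2 (Or.inl (by linarith))
    · exact lt_abs.2 (Or.inr (by linarith))
    · exact lt_abs.2 (Or.inr (by linarith))

theorem disconnected_case_9_general (A : Matrix (Fin 2) (Fin 2) ℤ)
    (hchar : A.charpoly = X ^ 2 + C 3 * X + C 3 ∨ A.charpoly = X ^ 2 - C 3 * X + C 3)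
    (b : ℝ) (hb : 1 < b) (v : Fin 2 → ℝ)
    (hv : LinearIndependent ℝ ![v, (matR A).mulVec v])
    (hrange : b ≥ 33 / 10 ∨ b ≤ 33 / 23) :
    ¬ IsConnected (selfAffine A {0, v, b • v}) := by
  obtain ⟨σ, hσ, hM⟩ := exists_sign_of_charpoly hchar
  obtain ⟨g, hg, hwindow⟩ := exists_continuous_abs_sub_first_digit_le hσ hM hv b
  obtain ⟨θ, hθ₀, hθb, hθ⟩ := exists_far_from_digits hb hrange
  have hD : ({0, v, b • v} : Set (Fin 2 → ℝ)) = (· • v) '' {0, 1, b} := by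
    simp [Set.image_insert_eq]
  rw [hD]
  refine fun hT => not_isPreconnected_selfAffine (summable_inv_pow_mulVec hσ hM v) (by simp)
    (by simp) hg (fun c hc => hwindow c fun i => ?_) hθ₀ hθb hθ hT.isPreconnected
  rcases hc i with h | h | h <;> rw [h] <;> constructor <;> linarith

/-- For an expanding `A ∈ M₂(ℤ)` with characteristic polynomial `x² ± 3x + 3`
and digit set `{0, 1, b}v`, `b > 1`: if `b ≥ 33/10` or `b ≤ 33/23` then `T(A,D)` is disconnected. -/
theorem disconnected_case_9 (A : Matrix (Fin 2) (Fin 2) ℤ) (hA : IsExpanding A)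
    (hchar : A.charpoly = X ^ 2 + C 3 * X + C 3 ∨ A.charpoly = X ^ 2 - C 3 * X + C 3)
    (b : ℝ) (hb : 1 < b) (v : Fin 2 → ℝ)
    (hv : LinearIndependent ℝ ![v, (matR A).mulVec v])
    (hrange : b ≥ 33 / 10 ∨ b ≤ 33 / 23) :
    ¬ IsConnected (selfAffine A {0, v, b • v}) :=
  disconnected_case_9_general A hchar b hb v hv hrange
end

section
/- Let A ∈ Mₙ(ℤ) be an expanding matrix with |det A| = q and let D = {d₁, …, d_q} ⊂ ℝⁿ be a digit set of cardinality q. Define the edge relation E on D by (dᵢ, dⱼ) ∈ E if and only if (T + dᵢ) ∩ (T + dⱼ) ≠ ∅, where T = T(A, D). Then T is connected if and only if any two digits dᵢ, dⱼ ∈ D are E-connected, i.e., there exists a finite sequence d_{j₁}, …, d_{j_k} in D with d_{j₁} = dᵢ, d_{j_k} = dⱼ and (d_{j_l}, d_{j_{l+1}}) ∈ E for 1 ≤ l ≤ k−1. -/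
open Matrix Polynomial

/-!
Write `φ_d x = A⁻¹ (x + d)`. Then `T = ⋃_{d ∈ D} φ_d(T)`, and since `A⁻¹` is injective,
`φ_d(T) ∩ φ_{d'}(T) ≠ ∅` exactly when `(d, d') ∈ E`. If `T` is connected, its cover by the
finitely many closed pieces `φ_d(T)` must have a connected intersection graph.
Conversely, if `E` is connected, every iterate `F^k(B)` of the Hutchinson operator
`F K = ⋃_d φ_d(K)` on a ball `B ⊇ T` is connected and contains `T`. Every point of `F^k(B)`
lies within `‖A⁻ᵏ‖ · diam B` of `T`, and `‖A⁻ᵏ‖ → 0` by Gelfand's formula since `A⁻¹` has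
spectral radius `< 1`. A compact set that is squeezed between connected sets lying in
arbitrarily small neighbourhoods of it is connected.
-/

open Set Relation Metric Filter

theorem IsPreconnected.reflTransGen_of_biUnion {α ι : Type*} [TopologicalSpace α] {t : Set ι}
    {s : ι → Set α} (ht : t.Finite) (hclosed : ∀ i ∈ t, IsClosed (s i))
    (hne : ∀ i ∈ t, (s i).Nonempty) (h : IsPreconnected (⋃ i ∈ t, s i)) {i j : ι}
    (hi : i ∈ t) (hj : j ∈ t) :
    ReflTransGen (fun i j => i ∈ t ∧ j ∈ t ∧ (s i ∩ s j).Nonempty) i j := by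
  set R := fun i j => i ∈ t ∧ j ∈ t ∧ (s i ∩ s j).Nonempty
  set C := {k ∈ t | ReflTransGen R i k}
  have hC : ∀ k ∈ t \ C, ∀ l ∈ C, Disjoint (s k) (s l) := by
    rintro k ⟨hkt, hkC⟩ l ⟨hlt, hil⟩
    refine Set.disjoint_left.mpr fun z hzk hzl => hkC ⟨hkt, hil.tail ⟨hlt, hkt, z, hzl, hzk⟩⟩
  by_contra hij
  obtain ⟨z, -, hzC, hzC'⟩ := isPreconnected_closed_iff.mp h (⋃ k ∈ C, s k) (⋃ k ∈ t \ C, s k)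
    ((ht.subset fun _ hk => hk.1).isClosed_biUnion fun k hk => hclosed k hk.1)
    ((ht.subset fun _ hk => hk.1).isClosed_biUnion fun k hk => hclosed k hk.1)
    (fun z hz => by
      obtain ⟨k, hk, hzk⟩ := mem_iUnion₂.mp hz
      by_cases hkC : k ∈ C
      exacts [Or.inl (mem_biUnion hkC hzk), Or.inr (mem_biUnion ⟨hk, hkC⟩ hzk)])
    (by
      obtain ⟨z, hz⟩ := hne i hi
      exact ⟨z, mem_biUnion hi hz, mem_biUnion ⟨hi, .refl⟩ hz⟩)
    (by
      obtain ⟨z, hz⟩ := hne j hj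
      exact ⟨z, mem_biUnion hj hz, mem_biUnion ⟨hj, fun h => hij h.2⟩ hz⟩)
  obtain ⟨l, hl, hzl⟩ := mem_iUnion₂.mp hzC
  obtain ⟨k, hk, hzk⟩ := mem_iUnion₂.mp hzC'
  exact Set.disjoint_left.mp (hC k hk l hl) hzk hzl

theorem IsCompact.isPreconnected_of_forall_thickening {α : Type*} [MetricSpace α]
    {T : Set α} (hT : IsCompact T)
    (h : ∀ ε > 0, ∃ P, IsPreconnected P ∧ T ⊆ P ∧ P ⊆ thickening ε T) : IsPreconnected T := by
  refine isPreconnected_closed_iff.mpr fun u v hu hv hcover hTu hTv => ?_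
  by_contra hdisj
  obtain ⟨δ, hδ, hsep⟩ := Disjoint.exists_thickenings (t := T ∩ v)
    (Set.disjoint_left.mpr fun z hzu hzv => hdisj ⟨z, hzu.1, hzu.2, hzv.2⟩)
    (hT.inter_right hu) (hT.isClosed.inter hv)
  obtain ⟨P, hP, hTP, hPT⟩ := h δ hδ
  have hsplit : T = T ∩ u ∪ T ∩ v := by
    rw [← Set.inter_union_distrib_left, Set.inter_eq_left.mpr hcover]
  obtain ⟨z, -, hz⟩ := hP _ _ isOpen_thickening isOpen_thickening
    (by rw [← thickening_union, ← hsplit]; exact hPT)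
    (hTu.mono fun z hz => ⟨hTP hz.1, self_subset_thickening hδ _ hz⟩)
    (hTv.mono fun z hz => ⟨hTP hz.1, self_subset_thickening hδ _ hz⟩)
  exact Set.disjoint_left.mp hsep hz.1 hz.2

section BanachAlgebra

variable {𝔸 : Type*} [NormedRing 𝔸] [NormedAlgebra ℂ 𝔸] [CompleteSpace 𝔸]

theorem summable_norm_pow_of_spectralRadius_lt_one {a : 𝔸} (ha : spectralRadius ℂ a < 1) :
    Summable fun k => ‖a ^ k‖ := by
  obtain ⟨r, hr0, har, hr1⟩ := ENNReal.lt_iff_exists_real_btwn.mp ha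
  rw [ENNReal.ofReal_lt_one] at hr1
  have hroot : ∀ᶠ k : ℕ in atTop, ‖a ^ k‖ ^ (1 / (k : ℝ)) < r :=
    ((spectrum.pow_norm_pow_one_div_tendsto_nhds_spectralRadius a).eventually_lt_const
      har).mono fun k hk => ((ENNReal.ofReal_lt_ofReal_iff').mp hk).1
  refine Summable.of_norm_bounded_eventually_nat (summable_geometric_of_lt_one hr0 hr1) ?_
  filter_upwards [hroot, eventually_ne_atTop 0] with k hk hk0
  rw [norm_norm, ← Real.rpow_inv_natCast_pow (norm_nonneg (a ^ k)) hk0, ← one_div]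
  exact pow_le_pow_left₀ (by positivity) hk.le k

theorem spectralRadius_inv_lt_one (u : 𝔸ˣ) (hu : ∀ z ∈ spectrum ℂ (u : 𝔸), 1 < ‖z‖) :
    spectralRadius ℂ (↑u⁻¹ : 𝔸) < 1 := by
  cases subsingleton_or_nontrivial 𝔸
  · simp
  obtain ⟨z, hz, hρ⟩ := spectrum.exists_nnnorm_eq_spectralRadius (↑u⁻¹ : 𝔸)
  have hz0 : z ≠ 0 := fun h => spectrum.zero_notMem ℂ (u⁻¹).isUnit (h ▸ hz)
  have hzinv : z⁻¹ ∈ spectrum ℂ (u : 𝔸) := by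
    simpa using (spectrum.inv_mem_iff (r := (Units.mk0 z hz0)⁻¹) (a := u)).mpr (by simpa using hz)
  rw [← hρ, ← ENNReal.coe_one, ENNReal.coe_lt_coe, ← NNReal.coe_lt_coe, coe_nnnorm,
    NNReal.coe_one]
  have := hu _ hzinv
  rw [norm_inv] at this
  exact (one_lt_inv₀ (norm_pos_iff.mpr hz0)).mp this

end BanachAlgebra

namespace IsExpanding

variable {n : ℕ} {A : Matrix (Fin n) (Fin n) ℤ}

theorem det_ne_zero (hA : IsExpanding A) : A.det ≠ 0 := by
  intro hdet
  refine (hA 0 ?_).not_gt (by simp)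
  have hcoeff : A.charpoly.coeff 0 = 0 := by
    simpa [hdet] using (det_eq_sign_charpoly_coeff A).symm
  rw [← coeff_zero_eq_aeval_zero', hcoeff, map_zero]

theorem isUnit_det_matR (hA : IsExpanding A) : IsUnit (matR A).det := by
  have hdet : (matR A).det = A.det := (RingHom.map_det (Int.castRingHom ℝ) A).symm
  rw [isUnit_iff_ne_zero, hdet, Int.cast_ne_zero]
  exact hA.det_ne_zero

theorem one_lt_norm_of_mem_spectrum (hA : IsExpanding A) {z : ℂ}
    (hz : z ∈ spectrum ℂ ((matR A).map (algebraMap ℝ ℂ))) : 1 < ‖z‖ := by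
  have hmap : (matR A).map (algebraMap ℝ ℂ) = A.map (Int.castRingHom ℂ) := by
    ext i j; simp [matR]
  rw [hmap, mem_spectrum_iff_isRoot_charpoly, charpoly_map, IsRoot, eval_map,
    ← algebraMap_int_eq, ← aeval_def] at hz
  exact hA z hz

theorem injective_inv_mulVec (hA : IsExpanding A) :
    Function.Injective ((matR A)⁻¹ *ᵥ ·) :=
  mulVec_injective_iff_isUnit.mpr (isUnit_nonsing_inv_iff.mpr
    ((isUnit_iff_isUnit_det _).mpr hA.isUnit_det_matR))

open scoped Matrix.Norms.Operator in
theorem summable_norm_inv_pow (hA : IsExpanding A) :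
    Summable fun k => ‖(matR A)⁻¹ ^ k‖ := by
  set f := algebraMap ℝ ℂ
  have hmul : (matR A).map f * (matR A)⁻¹.map f = 1 := by
    rw [← Matrix.map_mul, mul_nonsing_inv _ hA.isUnit_det_matR,
      Matrix.map_one _ (map_zero f) (map_one f)]
  have hmul' : (matR A)⁻¹.map f * (matR A).map f = 1 := by
    rw [← Matrix.map_mul, nonsing_inv_mul _ hA.isUnit_det_matR,
      Matrix.map_one _ (map_zero f) (map_one f)]
  have hρ := spectralRadius_inv_lt_one ⟨_, _, hmul, hmul'⟩ fun _ hz =>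
    hA.one_lt_norm_of_mem_spectrum hz
  refine (summable_norm_pow_of_spectralRadius_lt_one hρ).congr fun k => ?_
  simp only [Units.inv_mk]
  rw [← Matrix.map_pow]
  simp [linfty_opNorm_def, f]

end IsExpanding

section SelfAffine

variable {n : ℕ} {A : Matrix (Fin n) (Fin n) ℤ} {D : Finset (Fin n → ℝ)}

noncomputable def digitMap (A : Matrix (Fin n) (Fin n) ℤ) (d x : Fin n → ℝ) : Fin n → ℝ :=
  (matR A)⁻¹ *ᵥ (x + d)

noncomputable def hutchinson (A : Matrix (Fin n) (Fin n) ℤ) (D : Finset (Fin n → ℝ))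
    (K : Set (Fin n → ℝ)) : Set (Fin n → ℝ) :=
  ⋃ d ∈ D, digitMap A d '' K

def DigitEdge (A : Matrix (Fin n) (Fin n) ℤ) (D : Finset (Fin n → ℝ)) (x y : Fin n → ℝ) :
    Prop :=
  x ∈ D ∧ y ∈ D ∧ ∃ s ∈ selfAffine A ↑D, ∃ t ∈ selfAffine A ↑D, s + x = t + y

theorem continuous_digitMap (d : Fin n → ℝ) : Continuous (digitMap A d) :=
  continuous_const.matrix_mulVec (continuous_id.add continuous_const)

theorem hutchinson_mono {K K' : Set (Fin n → ℝ)} (h : K ⊆ K') :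
    hutchinson A D K ⊆ hutchinson A D K' :=
  biUnion_mono subset_rfl fun _ _ => image_mono h

open scoped Matrix.Norms.Operator in
theorem summable_digitSeries (hA : IsExpanding A) {d : ℕ → Fin n → ℝ} (hd : ∀ i, d i ∈ D) :
    Summable fun i => ((matR A)⁻¹ ^ (i + 1)) *ᵥ d i := by
  refine .of_norm_bounded
    (((summable_nat_add_iff 1).mpr hA.summable_norm_inv_pow).mul_right (∑ e ∈ D, ‖e‖))
    fun i => (linfty_opNorm_mulVec _ _).trans ?_
  exact mul_le_mul_of_nonneg_left (Finset.single_le_sum (fun e _ => norm_nonneg e) (hd i))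
    (norm_nonneg _)

theorem HasSum.digitSeries_shift {d : ℕ → Fin n → ℝ} {y : Fin n → ℝ}
    (h : HasSum (fun i => ((matR A)⁻¹ ^ (i + 1)) *ᵥ d (i + 1)) y) :
    HasSum (fun i => ((matR A)⁻¹ ^ (i + 1)) *ᵥ d i) (digitMap A (d 0) y) := by
  have hL := (LinearMap.toContinuousLinearMap (mulVecLin (matR A)⁻¹)).hasSum h
  simp only [LinearMap.coe_toContinuousLinearMap', mulVecLin_apply, mulVec_mulVec,
    ← pow_succ'] at hL
  have := HasSum.zero_add (f := fun i => ((matR A)⁻¹ ^ (i + 1)) *ᵥ d i) hL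
  rwa [_root_.zero_add, pow_one, add_comm, ← mulVec_add] at this

theorem digitMap_mem_selfAffine {e t : Fin n → ℝ} (he : e ∈ D) (ht : t ∈ selfAffine A ↑D) :
    digitMap A e t ∈ selfAffine A ↑D := by
  obtain ⟨d, hd, hsum⟩ := ht
  let d' : ℕ → Fin n → ℝ := fun | 0 => e | i + 1 => d i
  exact ⟨d', fun | 0 => he | i + 1 => hd i, HasSum.digitSeries_shift (d := d') hsum⟩

theorem hutchinson_selfAffine (hA : IsExpanding A) :
    hutchinson A D (selfAffine A ↑D) = selfAffine A ↑D := by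
  refine subset_antisymm (iUnion₂_subset fun e he => image_subset_iff.mpr fun t ht =>
    digitMap_mem_selfAffine he ht) ?_
  rintro x ⟨d, hd, hsum⟩
  obtain ⟨y, hy⟩ := summable_digitSeries hA fun i => hd (i + 1)
  exact mem_biUnion (hd 0) ⟨y, ⟨_, fun i => hd (i + 1), hy⟩, hy.digitSeries_shift.unique hsum⟩

open scoped Matrix.Norms.Operator in
theorem isCompact_selfAffine (hA : IsExpanding A) : IsCompact (selfAffine A ↑D) := by
  have hrange : selfAffine A ↑D =
      range fun d : ℕ → D => ∑' i, ((matR A)⁻¹ ^ (i + 1)) *ᵥ (d i : Fin n → ℝ) := by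
    ext x
    constructor
    · rintro ⟨d, hd, hsum⟩
      exact ⟨fun i => ⟨d i, hd i⟩, hsum.tsum_eq⟩
    · rintro ⟨d, rfl⟩
      exact ⟨_, fun i => (d i).2, (summable_digitSeries hA fun i => (d i).2).hasSum⟩
  rw [hrange]
  refine isCompact_range (continuous_tsum (fun i => ?_)
    (((summable_nat_add_iff 1).mpr hA.summable_norm_inv_pow).mul_right (∑ e ∈ D, ‖e‖))
    fun i d => ?_)
  · exact continuous_const.matrix_mulVec (continuous_subtype_val.comp (continuous_apply i))
  · exact (linfty_opNorm_mulVec _ _).trans (mul_le_mul_of_nonneg_left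
      (Finset.single_le_sum (fun e _ => norm_nonneg e) (d i).2) (norm_nonneg _))

theorem selfAffine_nonempty (hA : IsExpanding A) (hD : D.Nonempty) :
    (selfAffine A ↑D).Nonempty := by
  obtain ⟨e, he⟩ := hD
  exact ⟨_, fun _ => e, fun _ => he, (summable_digitSeries hA fun _ => he).hasSum⟩

theorem exists_sub_eq_of_mem_iterate_hutchinson {K : Set (Fin n → ℝ)} {k : ℕ}
    {y : Fin n → ℝ} (hy : y ∈ (hutchinson A D)^[k] K) {t : Fin n → ℝ}
    (ht : t ∈ selfAffine A ↑D) :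
    ∃ t' ∈ selfAffine A ↑D, ∃ x ∈ K, y - t' = ((matR A)⁻¹ ^ k) *ᵥ (x - t) := by
  induction k generalizing y with
  | zero => exact ⟨t, ht, y, hy, by simp⟩
  | succ k ih =>
    rw [Function.iterate_succ_apply'] at hy
    obtain ⟨e, he, y', hy', rfl⟩ := mem_iUnion₂.mp hy
    obtain ⟨t', ht', x, hx, hyt⟩ := ih hy'
    refine ⟨digitMap A e t', digitMap_mem_selfAffine he ht', x, hx, ?_⟩
    rw [digitMap, digitMap, ← mulVec_sub, add_sub_add_right_eq_sub, hyt, mulVec_mulVec,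
      ← pow_succ']

theorem selfAffine_subset_iterate_hutchinson (hA : IsExpanding A) {K : Set (Fin n → ℝ)}
    (hK : selfAffine A ↑D ⊆ K) (k : ℕ) : selfAffine A ↑D ⊆ (hutchinson A D)^[k] K := by
  induction k with
  | zero => exact hK
  | succ k ih =>
    rw [Function.iterate_succ_apply', ← hutchinson_selfAffine hA]
    exact hutchinson_mono ih

theorem isPreconnected_iterate_hutchinson (hA : IsExpanding A)
    (hE : ∀ di ∈ D, ∀ dj ∈ D, ReflTransGen (DigitEdge A D) di dj) {K : Set (Fin n → ℝ)}
    (hK : IsPreconnected K) (hTK : selfAffine A ↑D ⊆ K) (k : ℕ) :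
    IsPreconnected ((hutchinson A D)^[k] K) := by
  induction k with
  | zero => exact hK
  | succ k ih =>
    have hT := selfAffine_subset_iterate_hutchinson hA hTK k
    rw [Function.iterate_succ_apply']
    refine IsPreconnected.biUnion_of_reflTransGen
      (fun d _ => ih.image _ (continuous_digitMap d).continuousOn) fun i hi j hj => ?_
    refine ReflTransGen.mono (fun x y ⟨hx, _, s, hs, t, ht, hst⟩ => ⟨?_, hx⟩) _ _ (hE i hi j hj)
    exact ⟨digitMap A x s, mem_image_of_mem _ (hT hs), t, hT ht, by rw [digitMap, digitMap, hst]⟩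

open scoped Matrix.Norms.Operator in
theorem isConnected_selfAffine_of_reflTransGen (hA : IsExpanding A) (hD : D.Nonempty)
    (hE : ∀ di ∈ D, ∀ dj ∈ D, ReflTransGen (DigitEdge A D) di dj) :
    IsConnected (selfAffine A ↑D) := by
  have hT := isCompact_selfAffine hA (D := D)
  obtain ⟨t₀, ht₀⟩ := selfAffine_nonempty hA hD
  obtain ⟨R, hR⟩ := hT.isBounded.subset_closedBall 0
  refine ⟨⟨t₀, ht₀⟩, hT.isPreconnected_of_forall_thickening fun ε hε => ?_⟩
  obtain ⟨k, hk⟩ := ((hA.summable_norm_inv_pow.tendsto_atTop_zero.mul_const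
    (2 * R)).eventually_lt_const (by simpa using hε)).exists
  refine ⟨_, isPreconnected_iterate_hutchinson hA hE (convex_closedBall 0 R).isPreconnected hR k,
    selfAffine_subset_iterate_hutchinson hA hR k, fun y hy => ?_⟩
  obtain ⟨t, ht, x, hx, hyt⟩ := exists_sub_eq_of_mem_iterate_hutchinson hy ht₀
  have hxt₀ : ‖x - t₀‖ ≤ 2 * R := by
    linarith [norm_sub_le x t₀, mem_closedBall_zero_iff.mp hx, mem_closedBall_zero_iff.mp (hR ht₀)]
  refine mem_thickening_iff.mpr ⟨t, ht, ?_⟩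
  calc dist y t = ‖((matR A)⁻¹ ^ k) *ᵥ (x - t₀)‖ := by rw [dist_eq_norm, hyt]
    _ ≤ ‖(matR A)⁻¹ ^ k‖ * (2 * R) :=
      (linfty_opNorm_mulVec _ _).trans (mul_le_mul_of_nonneg_left hxt₀ (norm_nonneg _))
    _ < ε := hk

theorem reflTransGen_digitEdge_of_isPreconnected (hA : IsExpanding A)
    (hT : IsPreconnected (selfAffine A ↑D)) {di dj : Fin n → ℝ} (hi : di ∈ D) (hj : dj ∈ D) :
    ReflTransGen (DigitEdge A D) di dj := by
  rw [← hutchinson_selfAffine hA] at hT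
  refine ReflTransGen.mono ?_ _ _ (hT.reflTransGen_of_biUnion D.finite_toSet
    (fun d _ => ((isCompact_selfAffine hA).image (continuous_digitMap d)).isClosed)
    (fun d _ => (selfAffine_nonempty hA ⟨di, hi⟩).image _) hi hj)
  rintro x y ⟨hx, hy, _, ⟨s, hs, rfl⟩, t, ht, hst⟩
  exact ⟨hx, hy, s, hs, t, ht, hA.injective_inv_mulVec hst.symm⟩

end SelfAffine

/-- `T(A,D)` is connected iff any two digits of `D` are `E`-connected, where
`(d, d') ∈ E` iff `(T + d) ∩ (T + d') ≠ ∅`. -/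
theorem connected_iff_E_connected (n q : ℕ)
    (A : Matrix (Fin n) (Fin n) ℤ) (hA : IsExpanding A)
    (hdet : A.det.natAbs = q)
    (D : Finset (Fin n → ℝ)) (hcard : D.card = q) :
    IsConnected (selfAffine A ↑D) ↔
    ∀ di ∈ D, ∀ dj ∈ D,
      Relation.ReflTransGen
        (fun x y => x ∈ D ∧ y ∈ D ∧
          ∃ s ∈ selfAffine A ↑D, ∃ t ∈ selfAffine A ↑D, s + x = t + y)
        di dj := by
  have hD : D.Nonempty := by
    rw [← Finset.card_pos, hcard, ← hdet]
    exact Int.natAbs_pos.mpr hA.det_ne_zero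
  exact ⟨fun hT _ hi _ hj => reflTransGen_digitEdge_of_isPreconnected hA hT.isPreconnected hi hj,
    isConnected_selfAffine_of_reflTransGen hA hD⟩
end

section
/- Let A ∈ M₂(ℤ) be an expanding matrix with characteristic polynomial f(x) = x² + px + q, let v ∈ ℝ² be such that {v, Av} is linearly independent, define αᵢ, βᵢ by A^{−i}v = αᵢ v + βᵢ Av, and set α̃ = ∑_{i=1}^∞ |αᵢ| and β̃ = ∑_{i=1}^∞ |βᵢ| (both series converge). Let D = D₀v with D₀ ⊂ ℝ be a collinear digit set with T = T(A, D), and suppose l = γv + δAv = ∑_{i=1}^∞ bᵢ A^{−i} v with each bᵢ ∈ D₀ − D₀ (so that T + l is a neighbor of T, i.e., T ∩ (T + l) ≠ ∅). Then |γ| ≤ (sup_i |bᵢ|)·α̃ and |δ| ≤ (sup_i |bᵢ|)·β̃; moreover T + l′ is another neighbor of T, where l′ = Al − b₁v = γ′v + δ′Av with γ′ = −(qδ + b₁) and δ′ = γ − pδ. -/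
open Matrix Polynomial

open Filter Topology

/-- In a complex Banach algebra, if the spectral radius of `a` is less than one then the
norms of the powers of `a` form a summable sequence. -/
lemma summable_norm_pow_of_sr_lt_one {A : Type*} [NormedRing A] [NormedAlgebra ℂ A]
    [CompleteSpace A] (a : A) (h : spectralRadius ℂ a < 1) :
    Summable (fun n : ℕ => ‖a ^ n‖) := by
  obtain ⟨c, hc1, hc2⟩ := ENNReal.lt_iff_exists_nnreal_btwn.mp h
  have hc2' : c < 1 := by exact_mod_cast hc2
  have ht := spectrum.pow_nnnorm_pow_one_div_tendsto_nhds_spectralRadius a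
  have hev : ∀ᶠ n : ℕ in atTop, (‖a ^ n‖₊ : ENNReal) ^ (1 / (n:ℝ)) < (c : ENNReal) :=
    ht.eventually_lt_const hc1
  obtain ⟨N, hN⟩ := hev.exists_forall_of_atTop
  have key : ∀ n, N + 1 ≤ n → ‖a ^ n‖ ≤ (c:ℝ) ^ n := by
    intro n hn
    have hn1 : 1 ≤ n := le_trans (Nat.le_add_left 1 N) hn
    have h1 := hN n (le_trans (Nat.le_succ N) hn)
    have hnR : (0:ℝ) < (n:ℝ) := by positivity
    have h2 : ((‖a ^ n‖₊ : ENNReal) ^ (1 / (n:ℝ))) ^ (n:ℝ) < (c : ENNReal) ^ (n:ℝ) :=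
      ENNReal.rpow_lt_rpow h1 hnR
    rw [← ENNReal.rpow_mul, one_div,
      inv_mul_cancel₀ hnR.ne', ENNReal.rpow_one, ENNReal.rpow_natCast] at h2
    have h4 : ‖a ^ n‖₊ < c ^ n := by exact_mod_cast h2
    exact_mod_cast h4.le
  have hsum : Summable (fun n : ℕ => (c:ℝ) ^ n) :=
    summable_geometric_of_lt_one c.coe_nonneg (by exact_mod_cast hc2')
  refine (summable_nat_add_iff (N + 1)).mp ?_
  refine Summable.of_nonneg_of_le (fun n => norm_nonneg _)
    (fun n => key (n + (N + 1)) (Nat.le_add_left _ _)) ?_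
  exact (summable_nat_add_iff (N + 1)).mpr hsum

set_option maxHeartbeats 2000000 in
/-- Neighbor-generating lemma: if `l = γv + δAv = ∑_{i≥1} bᵢ A^{-i} v` with
`bᵢ ∈ D₀ - D₀`, then `|γ| ≤ (sup|bᵢ|)·α̃`, `|δ| ≤ (sup|bᵢ|)·β̃`, and
`l' = Al - b₁v = -(qδ + b₁)v + (γ - pδ)Av` gives another neighbor of `T`. -/
theorem neighbor_generator (A : Matrix (Fin 2) (Fin 2) ℤ) (hA : IsExpanding A)
    (p q : ℤ) (hchar : A.charpoly = X ^ 2 + C p * X + C q)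
    (v : Fin 2 → ℝ) (hv : LinearIndependent ℝ ![v, (matR A).mulVec v])
    (α β : ℕ → ℝ)
    (hαβ : ∀ i : ℕ,
      ((matR A)⁻¹ ^ (i + 1)).mulVec v = α i • v + β i • (matR A).mulVec v)
    (D₀ : Finset ℝ) (b : ℕ → ℝ)
    (hb : ∀ i, ∃ d ∈ D₀, ∃ d' ∈ D₀, b i = d - d')
    (γ δ : ℝ)
    (hl : HasSum (fun i => b i • ((matR A)⁻¹ ^ (i + 1)).mulVec v)
      (γ • v + δ • (matR A).mulVec v)) :
    |γ| ≤ (⨆ i, |b i|) * (∑' i, |α i|) ∧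
    |δ| ≤ (⨆ i, |b i|) * (∑' i, |β i|) ∧
    HasSum (fun i => b (i + 1) • ((matR A)⁻¹ ^ (i + 1)).mulVec v)
      ((-((q : ℝ) * δ + b 0)) • v + (γ - (p : ℝ) * δ) • (matR A).mulVec v) := by
  classical
  set Mr : Matrix (Fin 2) (Fin 2) ℝ := matR A with hMrdef
  set B : Matrix (Fin 2) (Fin 2) ℝ := Mr⁻¹ with hBdef
  -- `q ≠ 0`
  have hq0 : q ≠ 0 := by
    intro h
    have h0 := hA 0 (by simp [hchar, h])
    norm_num at h0
  -- determinant of `A` is `q`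
  have hdetA : A.det = q := by
    have h := Matrix.det_eq_sign_charpoly_coeff A
    rw [hchar] at h
    simpa using h
  have hdetR : Mr.det = (q : ℝ) := by
    have h := RingHom.map_det (Int.castRingHom ℝ) A
    rw [hdetA] at h
    simpa [hMrdef, matR] using h.symm
  have hdetU : IsUnit Mr.det := by
    rw [hdetR]
    exact isUnit_iff_ne_zero.mpr (by exact_mod_cast hq0)
  have hMB : Mr * B = 1 := Matrix.mul_nonsing_inv Mr hdetU
  have hBM : B * Mr = 1 := Matrix.nonsing_inv_mul Mr hdetU
  -- Cayley–Hamilton over ℝ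
  have hMrmap : Mr = A.map (Int.castRingHom ℝ) := by
    ext i j; simp [hMrdef, matR]
  have hchR : Mr.charpoly = X ^ 2 + C (p:ℝ) * X + C (q:ℝ) := by
    rw [hMrmap, Matrix.charpoly_map, hchar]
    simp
  have hCH : Mr * Mr + (p:ℝ) • Mr + (q:ℝ) • 1 = 0 := by
    have h := Matrix.aeval_self_charpoly Mr
    rw [hchR] at h
    rw [map_add, map_add, map_pow, _root_.map_mul, aeval_X, aeval_C, aeval_C,
      Algebra.algebraMap_eq_smul_one, Algebra.algebraMap_eq_smul_one,
      smul_mul_assoc, one_mul, sq] at h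
    exact h

  -- the continuous linear map `x ↦ Mr *ᵥ x`
  let T : (Fin 2 → ℝ) →L[ℝ] (Fin 2 → ℝ) := LinearMap.toContinuousLinearMap (Matrix.mulVecLin Mr)
  have hT : ∀ x, T x = Mr *ᵥ x := fun x => rfl
  have hM2 : Mr * Mr = -((p:ℝ) • Mr) - (q:ℝ) • 1 := by
    have h' : Mr * Mr + ((p:ℝ) • Mr + (q:ℝ) • 1) = 0 := by rw [← add_assoc]; exact hCH
    rw [eq_neg_of_add_eq_zero_left h']
    abel
  have hMMv : Mr *ᵥ (Mr *ᵥ v) = -((p:ℝ) • (Mr *ᵥ v)) - (q:ℝ) • v := by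
    rw [Matrix.mulVec_mulVec, hM2, Matrix.sub_mulVec, Matrix.neg_mulVec,
      Matrix.smul_mulVec, Matrix.smul_mulVec, Matrix.one_mulVec]
  have hpow : ∀ n : ℕ, Mr * B ^ (n + 1 + 1) = B ^ (n + 1) := by
    intro n
    rw [pow_succ']
    rw [← mul_assoc, hMB, one_mul]
  have hBv : Mr *ᵥ (B ^ 1 *ᵥ v) = v := by
    rw [Matrix.mulVec_mulVec, pow_one, hMB, Matrix.one_mulVec]
  -- the shifted series
  have hl2 : HasSum (fun n => b (n + 1) • (B ^ (n + 1 + 1)) *ᵥ v)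
      ((γ • v + δ • Mr *ᵥ v) - b 0 • (B ^ 1) *ᵥ v) := by
    refine (hasSum_nat_add_iff (f := fun i => b i • (B ^ (i + 1)) *ᵥ v) 1).mpr ?_
    simpa using hl
  have hl3 : HasSum (fun n => b (n + 1) • (B ^ (n + 1)) *ᵥ v)
      ((-((q : ℝ) * δ + b 0)) • v + (γ - (p : ℝ) * δ) • Mr *ᵥ v) := by
    have h4 := hl2.mapL T
    have hterm : (fun n => T (b (n + 1) • (B ^ (n + 1 + 1)) *ᵥ v))
        = fun n => b (n + 1) • (B ^ (n + 1)) *ᵥ v := by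
      funext n
      rw [_root_.map_smul, hT, Matrix.mulVec_mulVec, hpow]
    have hval : T ((γ • v + δ • Mr *ᵥ v) - b 0 • (B ^ 1) *ᵥ v)
        = (-((q : ℝ) * δ + b 0)) • v + (γ - (p : ℝ) * δ) • Mr *ᵥ v := by
      rw [map_sub, map_add, _root_.map_smul, _root_.map_smul, _root_.map_smul, hT, hT, hT, hMMv, hBv]
      module
    rw [hterm, hval] at h4
    exact h4

  -- the basis `{v, Av}`
  let bas : Module.Basis (Fin 2) ℝ (Fin 2 → ℝ) :=
    basisOfLinearIndependentOfCardEqFinrank hv (by simp)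
  have hbas : ⇑bas = ![v, Mr *ᵥ v] := coe_basisOfLinearIndependentOfCardEqFinrank _ _
  have hbas0 : bas 0 = v := by rw [hbas]; simp
  have hbas1 : bas 1 = Mr *ᵥ v := by rw [hbas]; simp
  let c0 : (Fin 2 → ℝ) →L[ℝ] ℝ := LinearMap.toContinuousLinearMap (bas.coord 0)
  let c1 : (Fin 2 → ℝ) →L[ℝ] ℝ := LinearMap.toContinuousLinearMap (bas.coord 1)
  have hc00 : c0 v = 1 := by
    show bas.coord 0 v = 1
    rw [← hbas0, Module.Basis.coord_apply, Module.Basis.repr_self]; simp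
  have hc01 : c0 (Mr *ᵥ v) = 0 := by
    show bas.coord 0 (Mr *ᵥ v) = 0
    rw [← hbas1, Module.Basis.coord_apply, Module.Basis.repr_self]; simp
  have hc10 : c1 v = 0 := by
    show bas.coord 1 v = 0
    rw [← hbas0, Module.Basis.coord_apply, Module.Basis.repr_self]; simp
  have hc11 : c1 (Mr *ᵥ v) = 1 := by
    show bas.coord 1 (Mr *ᵥ v) = 1
    rw [← hbas1, Module.Basis.coord_apply, Module.Basis.repr_self]; simp
  have hα' : ∀ i, c0 ((B ^ (i + 1)) *ᵥ v) = α i := by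
    intro i
    rw [hαβ i, map_add, _root_.map_smul, _root_.map_smul, smul_eq_mul, smul_eq_mul,
      hc00, hc01]
    ring
  have hβ' : ∀ i, c1 ((B ^ (i + 1)) *ᵥ v) = β i := by
    intro i
    rw [hαβ i, map_add, _root_.map_smul, _root_.map_smul, smul_eq_mul, smul_eq_mul,
      hc10, hc11]
    ring
  -- the complex version of `B`
  let φ : ℝ →+* ℂ := algebraMap ℝ ℂ
  let Bc : Matrix (Fin 2) (Fin 2) ℂ := B.map ⇑φ
  have hpowc : ∀ n : ℕ, (B ^ n).map ⇑φ = Bc ^ n := by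
    intro n
    have h := map_pow (φ.mapMatrix (m := Fin 2)) B n
    simpa [RingHom.mapMatrix_apply] using h
  -- `B` is annihilated by `1 + p X + q X²`
  have e0 : Mr * (B * B) = B := by rw [← mul_assoc, hMB, one_mul]
  have hB2 : (1 : Matrix (Fin 2) (Fin 2) ℝ) + (p:ℝ) • B + (q:ℝ) • (B * B) = 0 := by
    have h := congrArg (fun X => X * (B * B)) hCH
    simp only [add_mul, smul_mul_assoc, one_mul, zero_mul] at h
    rw [mul_assoc, e0, hMB] at h
    exact h
  have hsmmap : ∀ (r : ℝ) (X : Matrix (Fin 2) (Fin 2) ℝ),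
      (r • X).map ⇑φ = ((r : ℂ)) • X.map ⇑φ := by
    intro r X; ext i j; simp [Matrix.map_apply, φ]
  have hB2c : (1 : Matrix (Fin 2) (Fin 2) ℂ) + (p:ℂ) • Bc + (q:ℂ) • (Bc * Bc) = 0 := by
    have h := congrArg (φ.mapMatrix (m := Fin 2)) hB2
    simp only [map_add, _root_.map_mul, _root_.map_one, _root_.map_zero, RingHom.mapMatrix_apply,
      hsmmap] at h
    simpa using h
  -- move to the Banach algebra of continuous linear endomorphisms
  let g : EuclideanSpace ℂ (Fin 2) →L[ℂ] EuclideanSpace ℂ (Fin 2) :=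
    Matrix.toEuclideanCLM (𝕜 := ℂ) Bc
  have hg : 1 + (p:ℂ) • g + (q:ℂ) • (g * g) = 0 := by
    have h := congrArg (Matrix.toEuclideanCLM (𝕜 := ℂ) (n := Fin 2)) hB2c
    simpa [map_add, _root_.map_smul, _root_.map_mul, _root_.map_one, _root_.map_zero] using h
  have hP : Polynomial.aeval g (C (q:ℂ) * X ^ 2 + C (p:ℂ) * X + 1) = 0 := by
    simp only [map_add, _root_.map_mul, _root_.map_one, aeval_C, map_pow, aeval_X,
      Algebra.algebraMap_eq_smul_one, smul_mul_assoc, one_mul, sq]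
    rw [← hg]
    module
  have hspec : ∀ z ∈ spectrum ℂ g, ‖z‖₊ < 1 := by
    intro z hz
    have h1 := spectrum.subset_polynomial_aeval g (C (q:ℂ) * X ^ 2 + C (p:ℂ) * X + 1)
      ⟨z, hz, rfl⟩
    rw [hP, spectrum.zero_eq] at h1
    have h2 : (q:ℂ) * z ^ 2 + (p:ℂ) * z + 1 = 0 := by simpa using h1
    have hz0 : z ≠ 0 := by rintro rfl; simp at h2
    have h3 : Polynomial.aeval z⁻¹ A.charpoly = 0 := by
      rw [hchar]
      simp only [map_add, map_pow, _root_.map_mul, aeval_X, aeval_C, eq_intCast, map_intCast]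
      calc z⁻¹ ^ 2 + (p:ℂ) * z⁻¹ + (q:ℂ)
          = ((q:ℂ) * z ^ 2 + (p:ℂ) * z + 1) * z⁻¹ ^ 2 := by
            field_simp
            ring
        _ = 0 := by rw [h2, zero_mul]
    have h4 := hA _ h3
    rw [norm_inv] at h4
    have h6 : 0 < ‖z‖ := norm_pos_iff.mpr hz0
    have h5 : ‖z‖ < 1 := by
      by_contra hcon
      push_neg at hcon
      have : (‖z‖)⁻¹ ≤ 1 := inv_le_one_of_one_le₀ hcon
      linarith
    have h7 : ‖z‖ < 1 := h5
    exact_mod_cast h7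
  have hsr : spectralRadius ℂ g < 1 := by
    have h := spectrum.spectralRadius_lt_of_forall_lt (a := g) hspec
    rwa [ENNReal.coe_one] at h
  have hsumg : Summable (fun n : ℕ => ‖g ^ n‖) := summable_norm_pow_of_sr_lt_one g hsr
  -- entrywise bounds
  have hcoord : ∀ (x : EuclideanSpace ℂ (Fin 2)) (k : Fin 2), ‖x k‖ ≤ ‖x‖ := by
    intro x k
    have h := norm_inner_le_norm (𝕜 := ℂ) (EuclideanSpace.single k 1) x
    simpa [EuclideanSpace.inner_single_left] using h
  have hentry : ∀ (n : ℕ) (k j : Fin 2), |(B ^ n) k j| ≤ ‖g ^ n‖ := by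
    intro n k j
    have h0 : g ^ n = Matrix.toEuclideanCLM (𝕜 := ℂ) (Bc ^ n) := (map_pow _ _ _).symm
    set y : EuclideanSpace ℂ (Fin 2) := (WithLp.equiv 2 _).symm (Pi.single j 1) with hy
    have h1 : (g ^ n) y = (WithLp.equiv 2 _).symm ((Bc ^ n) *ᵥ Pi.single j 1) := by
      rw [h0]
      exact Matrix.toEuclideanCLM_toLp _ _
    have h2 : ‖((Bc ^ n) *ᵥ Pi.single j 1) k‖ ≤ ‖g ^ n‖ := by
      have h3 := hcoord ((g ^ n) y) k
      have h4 : ‖(g ^ n) y‖ ≤ ‖g ^ n‖ * ‖y‖ := (g ^ n).le_opNorm y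
      have h5 : ‖y‖ = 1 := by
        rw [hy]
        simp
      rw [h5, mul_one] at h4
      have h8 := le_trans h3 h4
      rw [h1] at h8
      exact h8
    have h6 : ((Bc ^ n) *ᵥ Pi.single j 1) k = (Bc ^ n) k j := by
      simp [Matrix.mulVec_single]
    have h7 : (Bc ^ n) k j = ((B ^ n) k j : ℂ) := by
      rw [← hpowc n]; simp [Matrix.map_apply, φ]
    rw [h6, h7] at h2
    simpa using h2
  have hvec : ∀ n : ℕ, ‖(B ^ n) *ᵥ v‖ ≤ ‖g ^ n‖ * (∑ j, |v j|) := by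
    intro n
    have hnn : (0:ℝ) ≤ ‖g ^ n‖ * (∑ j, |v j|) := by positivity
    rw [pi_norm_le_iff_of_nonneg hnn]
    intro k
    have h0 : ((B ^ n) *ᵥ v) k = ∑ j, (B ^ n) k j * v j := rfl
    rw [Real.norm_eq_abs, h0]
    calc |∑ j, (B ^ n) k j * v j| ≤ ∑ j, |(B ^ n) k j * v j| :=
          Finset.abs_sum_le_sum_abs _ _
      _ ≤ ∑ j, ‖g ^ n‖ * |v j| := by
          refine Finset.sum_le_sum fun j _ => ?_
          rw [abs_mul]
          exact mul_le_mul_of_nonneg_right (hentry n k j) (abs_nonneg _)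
      _ = ‖g ^ n‖ * ∑ j, |v j| := by rw [Finset.mul_sum]
  have hgsum1 : Summable (fun n : ℕ => ‖g ^ (n + 1)‖ * (∑ j, |v j|)) :=
    ((summable_nat_add_iff 1).mpr hsumg).mul_right _
  have hαsum : Summable (fun i => |α i|) := by
    refine Summable.of_nonneg_of_le (fun i => abs_nonneg _) (fun i => ?_)
      (hgsum1.mul_left ‖c0‖)
    rw [← hα' i]
    calc |c0 ((B ^ (i + 1)) *ᵥ v)| ≤ ‖c0‖ * ‖(B ^ (i + 1)) *ᵥ v‖ := by
          simpa [Real.norm_eq_abs] using c0.le_opNorm ((B ^ (i + 1)) *ᵥ v)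
      _ ≤ ‖c0‖ * (‖g ^ (i + 1)‖ * (∑ j, |v j|)) :=
          mul_le_mul_of_nonneg_left (hvec (i + 1)) (norm_nonneg _)
  have hβsum : Summable (fun i => |β i|) := by
    refine Summable.of_nonneg_of_le (fun i => abs_nonneg _) (fun i => ?_)
      (hgsum1.mul_left ‖c1‖)
    rw [← hβ' i]
    calc |c1 ((B ^ (i + 1)) *ᵥ v)| ≤ ‖c1‖ * ‖(B ^ (i + 1)) *ᵥ v‖ := by
          simpa [Real.norm_eq_abs] using c1.le_opNorm ((B ^ (i + 1)) *ᵥ v)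
      _ ≤ ‖c1‖ * (‖g ^ (i + 1)‖ * (∑ j, |v j|)) :=
          mul_le_mul_of_nonneg_left (hvec (i + 1)) (norm_nonneg _)
  -- the digits are bounded
  obtain ⟨d₀, hd₀, d₀', hd₀', hbd0⟩ := hb 0
  have hne : D₀.Nonempty := ⟨d₀, hd₀⟩
  have hbS : ∀ i, |b i| ≤ D₀.sup' hne (fun d => |d|) + D₀.sup' hne (fun d => |d|) := by
    intro i
    obtain ⟨d, hd, d', hd', h⟩ := hb i
    rw [h, sub_eq_add_neg]
    refine (abs_add_le _ _).trans ?_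
    rw [abs_neg]
    exact add_le_add (Finset.le_sup' _ hd) (Finset.le_sup' _ hd')
  have hbdd : BddAbove (Set.range fun i => |b i|) := by
    refine ⟨D₀.sup' hne (fun d => |d|) + D₀.sup' hne (fun d => |d|), ?_⟩
    rintro x ⟨i, rfl⟩
    exact hbS i
  have hMb : ∀ i, |b i| ≤ ⨆ i, |b i| := fun i => le_ciSup hbdd i
  have hMb0 : (0:ℝ) ≤ ⨆ i, |b i| := le_trans (abs_nonneg _) (hMb 0)
  -- identify the coordinates of the sum
  have hγ : HasSum (fun i => b i * α i) γ := by
    have h := hl.mapL c0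
    simp only [_root_.map_smul, map_add, smul_eq_mul, hα'] at h
    rw [hc00, hc01] at h
    simpa using h
  have hδ : HasSum (fun i => b i * β i) δ := by
    have h := hl.mapL c1
    simp only [_root_.map_smul, map_add, smul_eq_mul, hβ'] at h
    rw [hc10, hc11] at h
    simpa using h
  refine ⟨?_, ?_, hl3⟩
  · have hle : ∀ i, |b i| * |α i| ≤ (⨆ i, |b i|) * |α i| := fun i =>
      mul_le_mul_of_nonneg_right (hMb i) (abs_nonneg _)
    have hsummul : Summable (fun i => |b i| * |α i|) :=
      Summable.of_nonneg_of_le (fun i => by positivity) hle (hαsum.mul_left _)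
    calc |γ| = |∑' i, b i * α i| := by rw [hγ.tsum_eq]
      _ ≤ ∑' i, |b i| * |α i| := by
          simpa [Real.norm_eq_abs, abs_mul] using
            norm_tsum_le_tsum_norm (f := fun i => b i * α i)
              (by simpa [Real.norm_eq_abs, abs_mul] using hsummul)
      _ ≤ ∑' i, (⨆ i, |b i|) * |α i| := Summable.tsum_mono hsummul (hαsum.mul_left _) hle
      _ = (⨆ i, |b i|) * ∑' i, |α i| := tsum_mul_left
  · have hle : ∀ i, |b i| * |β i| ≤ (⨆ i, |b i|) * |β i| := fun i =>
      mul_le_mul_of_nonneg_right (hMb i) (abs_nonneg _)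
    have hsummul : Summable (fun i => |b i| * |β i|) :=
      Summable.of_nonneg_of_le (fun i => by positivity) hle (hβsum.mul_left _)
    calc |δ| = |∑' i, b i * β i| := by rw [hδ.tsum_eq]
      _ ≤ ∑' i, |b i| * |β i| := by
          simpa [Real.norm_eq_abs, abs_mul] using
            norm_tsum_le_tsum_norm (f := fun i => b i * β i)
              (by simpa [Real.norm_eq_abs, abs_mul] using hsummul)
      _ ≤ ∑' i, (⨆ i, |b i|) * |β i| := Summable.tsum_mono hsummul (hβsum.mul_left _) hle
      _ = (⨆ i, |b i|) * ∑' i, |β i| := tsum_mul_left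
end

section
/- Let A ∈ M₂(ℤ) be an expanding matrix and let D ⊂ ℝ² be a digit set of cardinality |det A|. Set T₁ = T(A, D) and T₂ = T(−A, D). Then for any l ∈ ℝ², T₁ ∩ (T₁ + l) ≠ ∅ if and only if T₂ ∩ (T₂ + l) ≠ ∅ (equivalently, l ∈ T₁ − T₁ if and only if l ∈ T₂ − T₂). -/
open Matrix Polynomial

/-!
Write `x = ∑ A⁻ⁱ⁻¹ dᵢ` and `x + l = ∑ A⁻ⁱ⁻¹ eᵢ`. Since `(-A)⁻ⁱ⁻¹ = (-1)ⁱ⁺¹ A⁻ⁱ⁻¹`, swapping the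
digit sequences `d` and `e` at the even indices `i` gives two points of `T(-A, D)` whose
difference is again `∑ A⁻ⁱ⁻¹ (eᵢ - dᵢ) = l`. The argument is symmetric in `A` and `-A`.
-/

theorem Matrix.inv_neg {ι α : Type*} [Fintype ι] [DecidableEq ι] [CommRing α]
    (B : Matrix ι ι α) : (-B)⁻¹ = -B⁻¹ := by
  by_cases h : IsUnit B.det
  · simpa using B.inv_smul' (-1) h
  · have h' : ¬IsUnit (-B).det := by
      rw [Matrix.det_neg, IsUnit.mul_iff]
      exact fun hu => h hu.2
    rw [nonsing_inv_apply_not_isUnit _ h, nonsing_inv_apply_not_isUnit _ h', neg_zero]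

theorem matR_neg {n : ℕ} (A : Matrix (Fin n) (Fin n) ℤ) : matR (-A) = -matR A :=
  Matrix.map_neg _ (fun a => Int.cast_neg a) A

theorem inv_matR_neg_pow_mulVec {n : ℕ} (A : Matrix (Fin n) (Fin n) ℤ) (i : ℕ)
    (v : Fin n → ℝ) :
    ((matR (-A))⁻¹ ^ (i + 1)).mulVec v =
      if Even i then -((matR A)⁻¹ ^ (i + 1)).mulVec v else ((matR A)⁻¹ ^ (i + 1)).mulVec v := by
  rw [matR_neg, Matrix.inv_neg, ← neg_one_smul ℝ, _root_.smul_pow, Matrix.smul_mulVec]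
  split_ifs with hi
  · simp [(Even.add_one hi).neg_one_pow]
  · simp [(Nat.not_even_iff_odd.mp hi).add_one.neg_one_pow]

theorem exists_hasSum_swap_even {E : Type*} [UniformSpace E] [AddCommGroup E]
    [IsUniformAddGroup E] [CompleteSpace E] {a b : ℕ → E} {x y : E}
    (ha : HasSum a x) (hb : HasSum b y) :
    ∃ z, HasSum (fun i => if Even i then -b i else a i) z ∧
      HasSum (fun i => if Even i then -a i else b i) (z + (y - x)) := by
  set F : ℕ → E := fun i => if Even i then -b i else a i
  have hF : Summable F := by
    refine ((hb.summable.neg.indicator {i | Even i}).add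
      (ha.summable.indicator {i | Even i}ᶜ)).congr fun i => ?_
    by_cases hi : Even i <;> simp [F, hi]
  refine ⟨_, hF.hasSum, ?_⟩
  convert hF.hasSum.add (hb.sub ha) using 1
  funext i
  simp only [F]
  split_ifs <;> abel

theorem exists_mem_selfAffine_neg_add {n : ℕ} (A : Matrix (Fin n) (Fin n) ℤ)
    (D : Set (Fin n → ℝ)) (l : Fin n → ℝ)
    (h : ∃ x ∈ selfAffine A D, x + l ∈ selfAffine A D) :
    ∃ x ∈ selfAffine (-A) D, x + l ∈ selfAffine (-A) D := by
  obtain ⟨x, ⟨d, hd, hx⟩, ⟨e, he, hxl⟩⟩ := h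
  obtain ⟨z, hz, hzl⟩ := exists_hasSum_swap_even hx hxl
  have mem : ∀ i, (if Even i then e i else d i) ∈ D ∧ (if Even i then d i else e i) ∈ D :=
    fun i => by by_cases hi : Even i <;> simp [hi, hd i, he i]
  rw [add_sub_cancel_left] at hzl
  refine ⟨z, ⟨_, fun i => (mem i).1, ?_⟩, ⟨_, fun i => (mem i).2, ?_⟩⟩
  · exact hz.congr_fun fun i => by rw [inv_matR_neg_pow_mulVec]; split_ifs <;> rfl
  · exact hzl.congr_fun fun i => by rw [inv_matR_neg_pow_mulVec]; split_ifs <;> rfl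

theorem neighbors_neg_general (A : Matrix (Fin 2) (Fin 2) ℤ)
    (D : Finset (Fin 2 → ℝ))
    (l : Fin 2 → ℝ) :
    (∃ x ∈ selfAffine A ↑D, x + l ∈ selfAffine A ↑D) ↔
    (∃ x ∈ selfAffine (-A) ↑D, x + l ∈ selfAffine (-A) ↑D) := by
  refine ⟨exists_mem_selfAffine_neg_add A D l, fun h => ?_⟩
  simpa only [neg_neg] using exists_mem_selfAffine_neg_add (-A) D l h

/-- `T₁ = T(A, D)` and `T₂ = T(-A, D)` have the same neighbors:
`T₁ ∩ (T₁ + l) ≠ ∅` iff `T₂ ∩ (T₂ + l) ≠ ∅`. -/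
theorem neighbors_neg (A : Matrix (Fin 2) (Fin 2) ℤ) (hA : IsExpanding A)
    (D : Finset (Fin 2 → ℝ)) (hcard : D.card = A.det.natAbs)
    (l : Fin 2 → ℝ) :
    (∃ x ∈ selfAffine A ↑D, x + l ∈ selfAffine A ↑D) ↔
    (∃ x ∈ selfAffine (-A) ↑D, x + l ∈ selfAffine (-A) ↑D) :=
  neighbors_neg_general A D l
end

section
/- Let A ∈ M₂(ℤ) be an expanding matrix with characteristic polynomial f(x) = x² + x − 3, let v ∈ ℝ² be such that {v, Av} is linearly independent, and define αᵢ, βᵢ by A^{−i}v = αᵢ v + βᵢ Av for i ≥ 1. Then αᵢ ≥ 0 and βᵢ ≥ 0 for all i ≥ 1, and ∑_{i=1}^∞ αᵢ = 2 and ∑_{i=1}^∞ βᵢ = 1. -/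
open Matrix Polynomial

/-! Cayley–Hamilton gives `A² + A = 3`, so `A⁻¹ = (A + 1) / 3`, and in the basis `{v, Av}` the
map `A⁻¹` sends coordinates `(a, b)` to `(a / 3 + b, a / 3)`. Hence `(aᵢ, bᵢ) := (α_{i+1}, β_{i+1})`
starts at `(1/3, 1/3)` and stays nonnegative, and the partial sums telescope:
`∑_{i<N} aᵢ = 3 (a₀ + b₀) - 3 (a_N + b_N)` and `∑_{i<N} bᵢ = a₀ + 2 b₀ - (a_N + 2 b_N)`.
The first bounds the nonnegative series, so the coordinates tend to `0` and the sums are `2`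
and `1`. -/

open Filter Topology Finset

theorem aeval_matR_charpoly {n : ℕ} (A : Matrix (Fin n) (Fin n) ℤ) :
    aeval (matR A) A.charpoly = 0 := by
  have h := aeval_self_charpoly (A.map (algebraMap ℤ ℝ))
  rwa [charpoly_map, aeval_map_algebraMap] at h

theorem matR_sq_add_self_of_charpoly {A : Matrix (Fin 2) (Fin 2) ℤ}
    (hchar : A.charpoly = X ^ 2 + X - C 3) : matR A ^ 2 + matR A = (3 : ℝ) • 1 := by
  have h := aeval_matR_charpoly A
  rw [hchar] at h
  simp only [map_sub, map_add, map_pow, aeval_X, aeval_C] at h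
  rw [sub_eq_zero.mp h, Algebra.algebraMap_eq_smul_one]
  norm_cast

section QuadraticInverse

variable {K n : Type*} [Field K] [Fintype n] [DecidableEq n] {B : Matrix n n K} {c : K}

theorem Matrix.inv_eq_smul_add_one_of_sq_add_self (hc : c ≠ 0) (hB : B ^ 2 + B = c • 1) :
    B⁻¹ = c⁻¹ • (B + 1) :=
  inv_eq_right_inv <| by
    rw [Matrix.mul_smul, mul_add, mul_one, ← sq, hB, smul_smul, inv_mul_cancel₀ hc, one_smul]

theorem Matrix.inv_mulVec_smul_add_smul_mulVec (hc : c ≠ 0) (hB : B ^ 2 + B = c • 1)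
    (v : n → K) (a b : K) :
    B⁻¹ *ᵥ (a • v + b • B *ᵥ v) = (a / c + b) • v + (a / c) • B *ᵥ v := by
  have hsq : B *ᵥ B *ᵥ v = c • v - B *ᵥ v := by
    rw [mulVec_mulVec, ← sq, eq_sub_of_add_eq hB, sub_mulVec, smul_mulVec, one_mulVec]
  rw [inv_eq_smul_add_one_of_sq_add_self hc hB, smul_mulVec, add_mulVec, one_mulVec, mulVec_add,
    mulVec_smul, mulVec_smul, hsq]
  match_scalars <;> field_simp <;> ring

end QuadraticInverse

section CoordinateRecurrence

variable {a b : ℕ → ℝ} (ha : ∀ i, a (i + 1) = a i / 3 + b i) (hb : ∀ i, b (i + 1) = a i / 3)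
include ha hb

theorem nonneg_of_coordinate_recurrence (ha₀ : 0 ≤ a 0) (hb₀ : 0 ≤ b 0) (i : ℕ) :
    0 ≤ a i ∧ 0 ≤ b i := by
  induction i with
  | zero => exact ⟨ha₀, hb₀⟩
  | succ i ih =>
    rw [ha, hb]
    exact ⟨by linarith [ih.1, ih.2], by linarith [ih.1]⟩

theorem sum_range_fst_of_coordinate_recurrence (N : ℕ) :
    ∑ i ∈ range N, a i = 3 * (a 0 + b 0) - 3 * (a N + b N) := by
  induction N with
  | zero => simp
  | succ N ih => rw [sum_range_succ, ih, ha, hb]; ring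

theorem sum_range_snd_of_coordinate_recurrence (N : ℕ) :
    ∑ i ∈ range N, b i = a 0 + 2 * b 0 - (a N + 2 * b N) := by
  induction N with
  | zero => simp
  | succ N ih => rw [sum_range_succ, ih, ha, hb]; ring

theorem tendsto_zero_of_coordinate_recurrence (ha₀ : 0 ≤ a 0) (hb₀ : 0 ≤ b 0) :
    Tendsto a atTop (𝓝 0) ∧ Tendsto b atTop (𝓝 0) := by
  have hnonneg := nonneg_of_coordinate_recurrence ha hb ha₀ hb₀
  have hsumm : Summable a :=
    summable_of_sum_range_le (c := 3 * (a 0 + b 0)) (fun i => (hnonneg i).1) fun N => by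
      rw [sum_range_fst_of_coordinate_recurrence ha hb]
      linarith [(hnonneg N).1, (hnonneg N).2]
  have hta := hsumm.tendsto_atTop_zero
  refine ⟨hta, (tendsto_add_atTop_iff_nat 1).mp ?_⟩
  simpa [hb] using hta.div_const 3

theorem hasSum_fst_of_coordinate_recurrence (ha₀ : 0 ≤ a 0) (hb₀ : 0 ≤ b 0) :
    HasSum a (3 * (a 0 + b 0)) := by
  have hnonneg := nonneg_of_coordinate_recurrence ha hb ha₀ hb₀
  obtain ⟨hta, htb⟩ := tendsto_zero_of_coordinate_recurrence ha hb ha₀ hb₀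
  rw [hasSum_iff_tendsto_nat_of_nonneg (fun i => (hnonneg i).1),
    funext (sum_range_fst_of_coordinate_recurrence ha hb)]
  simpa using tendsto_const_nhds.sub ((hta.add htb).const_mul 3)

theorem hasSum_snd_of_coordinate_recurrence (ha₀ : 0 ≤ a 0) (hb₀ : 0 ≤ b 0) :
    HasSum b (a 0 + 2 * b 0) := by
  have hnonneg := nonneg_of_coordinate_recurrence ha hb ha₀ hb₀
  obtain ⟨hta, htb⟩ := tendsto_zero_of_coordinate_recurrence ha hb ha₀ hb₀
  rw [hasSum_iff_tendsto_nat_of_nonneg (fun i => (hnonneg i).2),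
    funext (sum_range_snd_of_coordinate_recurrence ha hb)]
  simpa using tendsto_const_nhds.sub (hta.add (htb.const_mul 2))

end CoordinateRecurrence

theorem alpha_beta_sums_general (A : Matrix (Fin 2) (Fin 2) ℤ)
    (hchar : A.charpoly = X ^ 2 + X - C 3)
    (v : Fin 2 → ℝ) (hv : LinearIndependent ℝ ![v, (matR A).mulVec v])
    (α β : ℕ → ℝ)
    (hαβ : ∀ i : ℕ, 1 ≤ i →
      ((matR A)⁻¹ ^ i).mulVec v = α i • v + β i • (matR A).mulVec v) :
    (∀ i : ℕ, 1 ≤ i → 0 ≤ α i ∧ 0 ≤ β i) ∧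
    HasSum (fun i : ℕ => α (i + 1)) 2 ∧ HasSum (fun i : ℕ => β (i + 1)) 1 := by
  have hB := matR_sq_add_self_of_charpoly hchar
  have hstep (a b : ℝ) := inv_mulVec_smul_add_smul_mulVec three_ne_zero hB v a b
  obtain ⟨hα₁, hβ₁⟩ : α 1 = 1 / 3 + 0 ∧ β 1 = 1 / 3 := by
    have h := hstep 1 0
    rw [one_smul, zero_smul, add_zero, ← pow_one (matR A)⁻¹, hαβ 1 le_rfl] at h
    exact hv.eq_of_pair h
  have hrec (i : ℕ) :
      α (i + 1 + 1) = α (i + 1) / 3 + β (i + 1) ∧ β (i + 1 + 1) = α (i + 1) / 3 := by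
    have h := hαβ (i + 2) (by omega)
    rw [pow_succ', ← mulVec_mulVec, hαβ (i + 1) (by omega), hstep] at h
    exact hv.eq_of_pair h.symm
  have ha := fun i => (hrec i).1
  have hb := fun i => (hrec i).2
  have ha₀ : 0 ≤ α 1 := by norm_num [hα₁]
  have hb₀ : 0 ≤ β 1 := by norm_num [hβ₁]
  refine ⟨fun i hi => ?_, ?_, ?_⟩
  · obtain ⟨j, rfl⟩ := Nat.exists_eq_add_of_le' hi
    exact nonneg_of_coordinate_recurrence (a := fun i => α (i + 1)) ha hb ha₀ hb₀ j
  · convert hasSum_fst_of_coordinate_recurrence (a := fun i => α (i + 1)) ha hb ha₀ hb₀ using 1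
    norm_num [hα₁, hβ₁]
  · convert hasSum_snd_of_coordinate_recurrence (a := fun i => α (i + 1)) ha hb ha₀ hb₀ using 1
    norm_num [hα₁, hβ₁]

/-- For `A` expanding with characteristic polynomial `x² + x - 3`, the
coordinates `αᵢ, βᵢ` of `A^{-i}v` in the basis `{v, Av}` are nonnegative and
`∑ αᵢ = 2`, `∑ βᵢ = 1`. -/
theorem alpha_beta_sums (A : Matrix (Fin 2) (Fin 2) ℤ) (hA : IsExpanding A)
    (hchar : A.charpoly = X ^ 2 + X - C 3)
    (v : Fin 2 → ℝ) (hv : LinearIndependent ℝ ![v, (matR A).mulVec v])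
    (α β : ℕ → ℝ)
    (hαβ : ∀ i : ℕ, 1 ≤ i →
      ((matR A)⁻¹ ^ i).mulVec v = α i • v + β i • (matR A).mulVec v) :
    (∀ i : ℕ, 1 ≤ i → 0 ≤ α i ∧ 0 ≤ β i) ∧
    HasSum (fun i : ℕ => α (i + 1)) 2 ∧ HasSum (fun i : ℕ => β (i + 1)) 1 :=
  alpha_beta_sums_general A hchar v hv α β hαβ
end
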